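/- arXiv:2312.05734 — 9 statements merged into one kernel-verified Lean document; each statement's English description precedes it below -/
import Mathlib

section
/- Let A and B be real Banach spaces, H : A → B a bounded linear operator with adjoint H* : B* → A*, and b0 ∈ B. Suppose â ∈ A satisfies ‖b0 − Hâ‖_B = inf{ ‖b0 − Ha‖_B : a ∈ A } > 0, and suppose λ̂ ∈ B* satisfies H*λ̂ = 0, ‖λ̂‖_{B*} = 1, and λ̂(b0) = sup{ |λ(b0)| : λ ∈ B*, ‖λ‖_{B*} ≤ 1, H*λ = 0 } > 0. Then λ̂ is norming for b0 − Hâ and (b0 − Hâ)/‖b0 − Hâ‖_B is norming for λ̂; that is, λ̂(b0 − Hâ) = ‖b0 − Hâ‖_B. -/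
open NormedSpace

/-- relation between solutions of the best approximation problem and of
its dual problem, via norming functionals. -/
theorem stmt_1
    {A B : Type*} [NormedAddCommGroup A] [NormedSpace ℝ A] [CompleteSpace A]
    [NormedAddCommGroup B] [NormedSpace ℝ B] [CompleteSpace B]
    (H : A →L[ℝ] B) (b0 : B) (ahat : A) (lamhat : StrongDual ℝ B)
    (hinf : ‖b0 - H ahat‖ = sInf {r : ℝ | ∃ a : A, r = ‖b0 - H a‖})
    (hinfpos : 0 < sInf {r : ℝ | ∃ a : A, r = ‖b0 - H a‖})
    (hker : lamhat.comp H = 0)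
    (hnorm : ‖lamhat‖ = 1)
    (hsup : lamhat b0 =
      sSup {r : ℝ | ∃ lam : StrongDual ℝ B, ‖lam‖ ≤ 1 ∧ lam.comp H = 0 ∧ r = |lam b0|})
    (hsuppos : 0 <
      sSup {r : ℝ | ∃ lam : StrongDual ℝ B, ‖lam‖ ≤ 1 ∧ lam.comp H = 0 ∧ r = |lam b0|}) :
    lamhat (b0 - H ahat) = ‖b0 - H ahat‖ ∧
      lamhat ((‖b0 - H ahat‖)⁻¹ • (b0 - H ahat)) = ‖lamhat‖ := by
  set I := sInf {r : ℝ | ∃ a : A, r = ‖b0 - H a‖} with hI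
  set SS := {r : ℝ | ∃ lam : StrongDual ℝ B, ‖lam‖ ≤ 1 ∧ lam.comp H = 0 ∧ r = |lam b0|} with hSS
  have hInonempty : {r : ℝ | ∃ a : A, r = ‖b0 - H a‖}.Nonempty := ⟨‖b0 - H 0‖, 0, rfl⟩
  -- every element of SS is ≤ I
  have hpt : ∀ r ∈ SS, r ≤ I := by
    rintro r ⟨lam, hlam1, hlam2, rfl⟩
    apply le_csInf hInonempty
    rintro s ⟨a, rfl⟩
    have hHa : lam (H a) = 0 := by
      have := ContinuousLinearMap.ext_iff.mp hlam2 a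
      simpa using this
    calc |lam b0| = |lam (b0 - H a)| := by rw [map_sub, hHa, sub_zero]
      _ ≤ ‖lam‖ * ‖b0 - H a‖ := lam.le_opNorm _
      _ ≤ 1 * ‖b0 - H a‖ := by
          exact mul_le_mul_of_nonneg_right hlam1 (norm_nonneg _)
      _ = ‖b0 - H a‖ := one_mul _
  -- construct the dual vector via the quotient by the closure of the range
  set S : Submodule ℝ B := (LinearMap.range (H : A →ₗ[ℝ] B)).topologicalClosure with hS
  have hSclosed : IsClosed (S : Set B) := (LinearMap.range (H : A →ₗ[ℝ] B)).isClosed_topologicalClosure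
  let π : B →L[ℝ] B ⧸ S :=
    S.mkQ.mkContinuous 1 (fun x => by
      simpa using Submodule.Quotient.norm_mk_le S x)
  have hπnorm : ‖π b0‖ = I := by
    have h1 : ‖π b0‖ = Metric.infDist b0 (S : Set B) := by
      exact
        QuotientAddGroup.norm_mk (S := S.toAddSubgroup) b0
    have h2 : (S : Set B) = closure ((LinearMap.range (H : A →ₗ[ℝ] B)) : Set B) := by
      simp [hS, Submodule.topologicalClosure_coe]
    have h3 : Metric.infDist b0 ((LinearMap.range (H : A →ₗ[ℝ] B)) : Set B)
        = ⨅ a : A, ‖b0 - H a‖ := by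
      rw [Metric.infDist_eq_iInf]
      have hsurj : Function.Surjective
          (fun a : A => (⟨H a, LinearMap.mem_range_self _ a⟩ :
            ((LinearMap.range (H : A →ₗ[ℝ] B)) : Set B))) := by
        rintro ⟨y, a, rfl⟩
        exact ⟨a, rfl⟩
      rw [← hsurj.iInf_comp]
      simp [dist_eq_norm]
    have h4 : I = ⨅ a : A, ‖b0 - H a‖ := by
      rw [hI]
      congr 1
      ext r
      simp [eq_comm, Set.range]
    rw [h1, h2, Metric.infDist_closure, h3, ← h4]
  have hπb0 : π b0 ≠ 0 := by
    intro h
    rw [h, norm_zero] at hπnorm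
    exact hinfpos.ne hπnorm
  obtain ⟨g, hg1, hg2⟩ := exists_dual_vector ℝ (π b0) (norm_ne_zero_iff.mpr hπb0)
  have hIle : I ≤ sSup SS := by
    have hbdd : BddAbove SS := ⟨I, hpt⟩
    apply le_csSup hbdd
    refine ⟨g.comp π, ?_, ?_, ?_⟩
    · calc ‖g.comp π‖ ≤ ‖g‖ * ‖π‖ := g.opNorm_comp_le π
        _ = ‖π‖ := by rw [hg1, one_mul]
        _ ≤ 1 := S.mkQ.mkContinuous_norm_le zero_le_one _
    · ext a
      have hmem : H a ∈ S := by
        apply Submodule.le_topologicalClosure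
        exact LinearMap.mem_range_self _ a
      have : π (H a) = 0 := by
        simpa [π, Submodule.mkQ_apply, Submodule.Quotient.mk_eq_zero] using hmem
      simp [this]
    · have hg2' : g (π b0) = ‖π b0‖ := by exact_mod_cast hg2
      have : g (π b0) = I := by rw [hg2', hπnorm]
      simp [this, abs_of_pos hinfpos]
  have hsupval : sSup SS = I := le_antisymm (csSup_le ⟨|lamhat b0|, lamhat, le_of_eq hnorm, hker, rfl⟩ hpt) hIle
  have hlamHahat : lamhat (H ahat) = 0 := by
    have := ContinuousLinearMap.ext_iff.mp hker ahat
    simpa using this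
  have key : lamhat (b0 - H ahat) = ‖b0 - H ahat‖ := by
    rw [map_sub, hlamHahat, sub_zero, hsup, hsupval, hinf]
  refine ⟨key, ?_⟩
  have hne : ‖b0 - H ahat‖ ≠ 0 := by rw [hinf]; exact hinfpos.ne'
  rw [map_smul, smul_eq_mul, key, inv_mul_cancel₀ hne, hnorm]
end

section
/- Let A_* and B_* be real normed spaces with continuous duals A = (A_*)* and B = (B_*)*, let H_* : B_* → A_* be a bounded linear operator, let H := (H_*)* : A → B be its adjoint, and let b0 ∈ B. If the norm-closure M of the range of H in B is closed in the weak* topology of B (the topology of pointwise convergence on B_*), then inf{ ‖b0 − Ha‖_B : a ∈ A } = sup{ |b0(ℓ)| : ℓ ∈ B_*, ‖ℓ‖_{B_*} ≤ 1, H_*ℓ = 0 }. -/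
open NormedSpace Pointwise

instance weakDualLCS {E : Type*} [NormedAddCommGroup E] [NormedSpace ℝ E] :
    LocallyConvexSpace ℝ (WeakDual ℝ E) :=
  WeakBilin.locallyConvexSpace (B := topDualPairing ℝ E)

lemma weakDual_dual_eval {E : Type*} [NormedAddCommGroup E] [NormedSpace ℝ E]
    (f : WeakDual ℝ E →L[ℝ] ℝ) : ∃ l : E, ∀ x : WeakDual ℝ E, f x = x l := by
  have : Nonempty E := ⟨0⟩
  have hw := (topDualPairing ℝ E).weakBilin_withSeminorms
  let B := topDualPairing ℝ E
  let q : Seminorm ℝ (WeakBilin (topDualPairing ℝ E)) :=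
    (normSeminorm ℝ ℝ).comp (f : WeakDual ℝ E →ₗ[ℝ] ℝ)
  have hq : Continuous q := by
    have h1 : (⇑q : WeakDual ℝ E → ℝ) = fun x => ‖f x‖ := rfl
    show Continuous (⇑q : WeakDual ℝ E → ℝ)
    rw [h1]
    exact f.continuous.norm
  obtain ⟨s, C, hC, hle⟩ := Seminorm.bound_of_continuous hw q hq
  have hker : ⨅ i : s, LinearMap.ker ((B.flip (i : E))) ≤
      LinearMap.ker (f : WeakDual ℝ E →ₗ[ℝ] ℝ) := by
    intro x hx
    simp only [Submodule.mem_iInf, LinearMap.mem_ker] at hx ⊢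
    have h0 : (s.sup B.toSeminormFamily) x ≤ 0 := by
      apply Seminorm.finset_sup_apply_le le_rfl
      intro i hi
      have h6 : B x (i : E) = 0 := hx ⟨i, hi⟩
      simp [LinearMap.toSeminormFamily_apply, h6]
    have h5 : (s.sup B.toSeminormFamily) x = 0 :=
      le_antisymm h0 (apply_nonneg _ x)
    have h2 : ‖f x‖ ≤ (C : ℝ) * (s.sup B.toSeminormFamily) x := hle x
    rw [h5, mul_zero] at h2
    exact norm_le_zero_iff.mp h2
  have hmem := mem_span_of_iInf_ker_le_ker (L := fun i : s => B.flip (i : E))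
    (K := (f : WeakDual ℝ E →ₗ[ℝ] ℝ)) hker
  have hsub : Submodule.span ℝ (Set.range fun i : s => B.flip (i : E)) ≤
      LinearMap.range B.flip := by
    rw [Submodule.span_le]
    rintro _ ⟨i, rfl⟩
    exact ⟨(i : E), rfl⟩
  obtain ⟨l, hl⟩ := hsub hmem
  exact ⟨l, fun x => (LinearMap.congr_fun hl x).symm⟩

set_option maxHeartbeats 1000000 in
/-- duality formula in the presence of pre-duals, under weak*-closedness
of the norm-closure of the range of the adjoint operator `H = (H_*)^*`. -/
theorem stmt_2
    {Astar Bstar : Type*} [NormedAddCommGroup Astar] [NormedSpace ℝ Astar]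
    [NormedAddCommGroup Bstar] [NormedSpace ℝ Bstar]
    (Hstar : Bstar →L[ℝ] Astar) (b0 : StrongDual ℝ Bstar)
    (hM : IsClosed (⇑(StrongDual.toWeakDual (𝕜 := ℝ) (E := Bstar)) ''
      closure (Set.range fun x : StrongDual ℝ Astar => x.comp Hstar))) :
    sInf {r : ℝ | ∃ x : StrongDual ℝ Astar, r = ‖b0 - x.comp Hstar‖} =
      sSup {r : ℝ | ∃ l : Bstar, ‖l‖ ≤ 1 ∧ Hstar l = 0 ∧ r = |b0 l|} := by
  classical
  set g : StrongDual ℝ Astar → StrongDual ℝ Bstar := (fun x : StrongDual ℝ Astar => x.comp Hstar) with hg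
  set Sinf := {r : ℝ | ∃ x : StrongDual ℝ Astar, r = ‖b0 - x.comp Hstar‖} with hSinf
  set Ssup := {r : ℝ | ∃ l : Bstar, ‖l‖ ≤ 1 ∧ Hstar l = 0 ∧ r = |b0 l|} with hSsup
  have ne₁ : Sinf.Nonempty := ⟨‖b0 - (0 : StrongDual ℝ Astar).comp Hstar‖, 0, rfl⟩
  have bdd₁ : BddBelow Sinf := ⟨0, by rintro r ⟨x, rfl⟩; exact norm_nonneg _⟩
  have h0sup : (0 : ℝ) ∈ Ssup := ⟨0, by simp⟩
  have key : ∀ r' ∈ Ssup, ∀ r ∈ Sinf, r' ≤ r := by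
    rintro r' ⟨l, hl1, hl0, rfl⟩ r ⟨x, rfl⟩
    have h1 : (x.comp Hstar) l = 0 := by
      simp [ContinuousLinearMap.comp_apply, hl0]
    have h2 : b0 l = (b0 - x.comp Hstar) l := by
      simp [ContinuousLinearMap.sub_apply, h1]
    rw [h2, ← Real.norm_eq_abs]
    calc ‖(b0 - x.comp Hstar) l‖ ≤ ‖b0 - x.comp Hstar‖ * ‖l‖ :=
          (b0 - x.comp Hstar).le_opNorm l
      _ ≤ ‖b0 - x.comp Hstar‖ * 1 := by
          exact mul_le_mul_of_nonneg_left hl1 (norm_nonneg _)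
      _ = ‖b0 - x.comp Hstar‖ := mul_one _
  have ne₂ : Ssup.Nonempty := ⟨0, h0sup⟩
  have bdd₂ : BddAbove Ssup :=
    ⟨‖b0 - (0 : StrongDual ℝ Astar).comp Hstar‖, fun r hr => key r hr _ ⟨0, rfl⟩⟩
  have hfinal : sSup Ssup ≤ sInf Sinf :=
    le_csInf ne₁ fun r hr => csSup_le ne₂ fun r' hr' => key r' hr' r hr
  refine le_antisymm ?_ hfinal
  by_contra hcon
  push_neg at hcon
  obtain ⟨r, hr1, hr2⟩ := exists_between hcon
  have hr0 : 0 < r := lt_of_le_of_lt (le_csSup bdd₂ h0sup) hr1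
  -- the two sets in the weak-* dual
  set K : Set (WeakDual ℝ Bstar) :=
    ⇑(StrongDual.toWeakDual (𝕜 := ℝ) (E := Bstar)) '' closure (Set.range g) with hK
  set Ball : Set (WeakDual ℝ Bstar) :=
    ⇑(WeakDual.toStrongDual (𝕜 := ℝ) (E := Bstar)) ⁻¹' Metric.closedBall (0 : StrongDual ℝ Bstar) r
    with hBall
  have hKclosed : IsClosed K := hM
  have hBcpt : IsCompact Ball := WeakDual.isCompact_closedBall 0 r
  have hSclosed : IsClosed (Ball + K) := hKclosed.add_left_of_isCompact hBcpt
  -- convexity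
  have hconvr : Convex ℝ (Set.range g) := by
    rintro _ ⟨x, rfl⟩ _ ⟨y, rfl⟩ a b _ _ _
    refine ⟨a • x + b • y, ?_⟩
    simp [hg, ContinuousLinearMap.add_comp, ContinuousLinearMap.smul_comp]
  have hMconv : Convex ℝ (closure (Set.range g)) := hconvr.closure
  have hKconv : Convex ℝ K := by
    have := hMconv.linear_image (StrongDual.toWeakDual (𝕜 := ℝ) (E := Bstar)).toLinearMap
    exact this
  have hBconv : Convex ℝ Ball :=
    (convex_closedBall (0 : StrongDual ℝ Bstar) r).linear_preimage
      (WeakDual.toStrongDual (𝕜 := ℝ) (E := Bstar)).toLinearMap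
  have hSconv : Convex ℝ (Ball + K) := hBconv.add hKconv
  -- the point is not in the sum
  have hb0 : StrongDual.toWeakDual b0 ∉ Ball + K := by
    intro hmem
    obtain ⟨c, hc, mk, hmk, hsum⟩ := Set.mem_add.mp hmem
    obtain ⟨m, hm, rfl⟩ := hmk
    rw [hBall, Set.mem_preimage, Metric.mem_closedBall, dist_zero_right] at hc
    have hcn : ‖WeakDual.toStrongDual c‖ ≤ r := hc
    have hb : WeakDual.toStrongDual c + m = b0 := by
      have h1 := congrArg (WeakDual.toStrongDual (𝕜 := ℝ) (E := Bstar)) hsum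
      exact h1
    obtain ⟨y, hy, hdist⟩ := Metric.mem_closure_iff.mp hm (sInf Sinf - r) (by linarith)
    obtain ⟨x, rfl⟩ := hy
    have hle2 : sInf Sinf ≤ ‖b0 - x.comp Hstar‖ := csInf_le bdd₁ ⟨x, rfl⟩
    have hlt : ‖b0 - x.comp Hstar‖ < sInf Sinf := by
      have he : b0 - x.comp Hstar = (WeakDual.toStrongDual c) + (m - g x) := by
        rw [← hb, hg]; abel
      rw [he]
      calc ‖(WeakDual.toStrongDual c) + (m - g x)‖
          ≤ ‖WeakDual.toStrongDual c‖ + ‖m - g x‖ := norm_add_le _ _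
        _ < r + (sInf Sinf - r) := by
            apply add_lt_add_of_le_of_lt hcn
            rw [← dist_eq_norm]; exact hdist
        _ = sInf Sinf := by ring
    linarith
  obtain ⟨f, u, hfb0, hfS⟩ := geometric_hahn_banach_point_closed hSconv hSclosed hb0
  obtain ⟨l0, hl0⟩ := weakDual_dual_eval f
  -- evaluation of the separating functional on the sum
  have hmemS : ∀ c : StrongDual ℝ Bstar, ‖c‖ ≤ r → ∀ m ∈ closure (Set.range g),
      u < c l0 + m l0 := by
    intro c hcr m hm
    have h1 : (StrongDual.toWeakDual c + StrongDual.toWeakDual m) ∈ Ball + K := by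
      refine Set.add_mem_add ?_ ⟨m, hm, rfl⟩
      show WeakDual.toStrongDual (StrongDual.toWeakDual c) ∈ Metric.closedBall 0 r
      rw [Metric.mem_closedBall, dist_zero_right]; exact hcr
    have h2 := hfS _ h1
    rw [hl0] at h2
    exact h2
  -- scaling invariance of the closure of the range
  have hscale : ∀ (t : ℝ), ∀ m ∈ closure (Set.range g), t • m ∈ closure (Set.range g) := by
    intro t m hm
    have h1 : (fun z : StrongDual ℝ Bstar => t • z) '' Set.range g ⊆ Set.range g := by
      rintro _ ⟨_, ⟨x, rfl⟩, rfl⟩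
      exact ⟨t • x, by simp [hg, ContinuousLinearMap.smul_comp]⟩
    have h2 := image_closure_subset_closure_image (f := fun z : StrongDual ℝ Bstar => t • z)
      (s := Set.range g) (continuous_const_smul t) (Set.mem_image_of_mem _ hm)
    exact closure_mono h1 h2
  have hm0 : ∀ m ∈ closure (Set.range g), m l0 = 0 := by
    intro m hm
    by_contra hne
    have h' : ∀ t : ℝ, u < t * (m l0) := by
      intro t
      have h := hmemS 0 (by simp [hr0.le]) (t • m) (hscale t m hm)
      simpa using h
    have h2 := h' ((u - 1) / (m l0))
    rw [div_mul_cancel₀ _ hne] at h2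
    linarith
  have hH0 : Hstar l0 = 0 := by
    apply eq_zero_of_forall_dual_eq_zero ℝ
    intro x
    have h := hm0 (g x) (subset_closure ⟨x, rfl⟩)
    simpa [hg, ContinuousLinearMap.comp_apply] using h
  have hball : ∀ c : StrongDual ℝ Bstar, ‖c‖ ≤ r → u < c l0 := by
    intro c hc
    have h0mem : (0 : StrongDual ℝ Bstar) ∈ Set.range g := ⟨0, by simp [hg]⟩
    have h := hmemS c hc 0 (subset_closure h0mem)
    simpa using h
  have hb0u : b0 l0 < u := by
    have h := hfb0
    rw [hl0] at h
    simpa using h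
  have hl0ne : l0 ≠ 0 := by
    intro h0
    have h1 := hball 0 (by simp [hr0.le])
    rw [h0] at hb0u h1
    simp at hb0u h1
    linarith
  obtain ⟨d, hd1, hdl⟩ := exists_dual_vector ℝ l0 (norm_ne_zero_iff.mpr hl0ne)
  have hc := hball ((-r) • d) (by rw [norm_smul]; simp [hd1, abs_of_pos hr0])
  have hcl : ((-r) • d) l0 = -r * ‖l0‖ := by
    simp [ContinuousLinearMap.smul_apply, hdl]
  rw [hcl] at hc
  have hn0 : 0 < ‖l0‖ := norm_pos_iff.mpr hl0ne
  set l : Bstar := ‖l0‖⁻¹ • l0 with hldef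
  have hlnorm : ‖l‖ ≤ 1 := by
    rw [hldef, norm_smul, Real.norm_eq_abs, abs_inv, abs_of_pos hn0,
      inv_mul_cancel₀ hn0.ne']
  have hlH : Hstar l = 0 := by
    rw [hldef, map_smul, hH0, smul_zero]
  have hlmem : |b0 l| ∈ Ssup := ⟨l, hlnorm, hlH, rfl⟩
  have hlt : r < |b0 l| := by
    have h1 : b0 l0 < -r * ‖l0‖ := lt_trans hb0u hc
    have h2 : b0 l = ‖l0‖⁻¹ * b0 l0 := by
      rw [hldef, map_smul, smul_eq_mul]
    rw [h2, abs_mul, abs_inv, abs_of_pos hn0, inv_mul_eq_div, lt_div_iff₀ hn0]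
    have h3 : r * ‖l0‖ < -(b0 l0) := by linarith
    have h4 : -(b0 l0) ≤ |b0 l0| := neg_le_abs (b0 l0)
    exact lt_of_lt_of_le h3 h4
  have := le_csSup bdd₂ hlmem
  linarith
end

section
/- Let A_* and B_* be real normed spaces with continuous duals A = (A_*)* and B = (B_*)*, let H_* : B_* → A_* be a bounded linear operator with adjoint H := (H_*)* : A → B, and let b0 ∈ B. Assume the norm-closure of the range of H in B is closed in the weak* topology of B. Suppose â ∈ A satisfies ‖b0 − Hâ‖_B = inf{ ‖b0 − Ha‖_B : a ∈ A } > 0, and suppose ℓ̂ ∈ B_* satisfies H_*ℓ̂ = 0, ‖ℓ̂‖_{B_*} = 1, and b0(ℓ̂) = sup{ |b0(ℓ)| : ℓ ∈ B_*, ‖ℓ‖_{B_*} ≤ 1, H_*ℓ = 0 } > 0. Then (b0 − Hâ)(ℓ̂) = ‖b0 − Hâ‖_B; that is, ℓ̂ (viewed as a functional on B) is norming for b0 − Hâ, and (b0 − Hâ)/‖b0 − Hâ‖_B is norming for ℓ̂. -/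
open NormedSpace


theorem weakdual_dual_eval' {E : Type*} [NormedAddCommGroup E] [NormedSpace ℝ E]
    (f : WeakDual ℝ E →L[ℝ] ℝ) : ∃ l : E, ∀ φ : WeakDual ℝ E, f φ = φ l := by
  classical
  have hp := (topDualPairing ℝ E).weakBilin_withSeminorms
  let q : Seminorm ℝ (WeakDual ℝ E) := (normSeminorm ℝ ℝ).comp (f : WeakDual ℝ E →ₗ[ℝ] ℝ)
  have hq : Continuous q := f.continuous.norm
  obtain ⟨s, C, hC0, hle⟩ := Seminorm.bound_of_continuous hp q hq
  let L : E → (WeakDual ℝ E →ₗ[ℝ] ℝ) := fun y =>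
    { toFun := fun φ => φ y
      map_add' := fun a b => rfl
      map_smul' := fun c a => rfl }
  have hker : (⨅ y : s, LinearMap.ker (L (y : E))) ≤
      LinearMap.ker (f : WeakDual ℝ E →ₗ[ℝ] ℝ) := by
    intro φ hφ
    simp only [Submodule.mem_iInf, LinearMap.mem_ker] at hφ ⊢
    have hsup : (s.sup ((topDualPairing ℝ E).toSeminormFamily)) φ = 0 := by
      refine le_antisymm (Seminorm.finset_sup_apply_le le_rfl ?_) (apply_nonneg _ _)
      intro y hy
      have : φ y = 0 := hφ ⟨y, hy⟩
      show ‖φ y‖ ≤ 0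
      simp [LinearMap.toSeminormFamily_apply, topDualPairing_apply, this]
    have h2 : ‖f φ‖ ≤ (C : ℝ) * ((s.sup ((topDualPairing ℝ E).toSeminormFamily)) φ) := by
      have h3 : q φ ≤ C • (s.sup ((topDualPairing ℝ E).toSeminormFamily) φ) := hle φ
      simpa [q, Seminorm.smul_apply, NNReal.smul_def] using h3
    rw [hsup, mul_zero] at h2
    exact norm_le_zero_iff.mp h2
  have hmem := mem_span_of_iInf_ker_le_ker (ι := s) (L := fun y : s => L (y : E))
    (K := (f : WeakDual ℝ E →ₗ[ℝ] ℝ)) hker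
  obtain ⟨c, hc⟩ := (Submodule.mem_span_range_iff_exists_fun ℝ).1 hmem
  refine ⟨∑ i : s, c i • (i : E), fun φ => ?_⟩
  have h1 : f φ = (∑ i : s, c i • L (i : E)) φ := by rw [hc]; rfl
  rw [h1]
  rw [map_sum φ]
  simp only [LinearMap.coe_sum, Finset.sum_apply, LinearMap.smul_apply, smul_eq_mul]
  congr 1
  ext i
  rw [map_smul]
  rfl

set_option maxHeartbeats 1000000 in
/-- norming relation between solutions of the primal and dual problems,
in the pre-dual setting. -/
theorem stmt_3
    {Astar Bstar : Type*} [NormedAddCommGroup Astar] [NormedSpace ℝ Astar]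
    [NormedAddCommGroup Bstar] [NormedSpace ℝ Bstar]
    (Hstar : Bstar →L[ℝ] Astar) (b0 : StrongDual ℝ Bstar)
    (hM : IsClosed (⇑(StrongDual.toWeakDual (𝕜 := ℝ) (E := Bstar)) ''
      closure (Set.range fun x : StrongDual ℝ Astar => x.comp Hstar)))
    (ahat : StrongDual ℝ Astar) (lhat : Bstar)
    (hinf : ‖b0 - ahat.comp Hstar‖ =
      sInf {r : ℝ | ∃ x : StrongDual ℝ Astar, r = ‖b0 - x.comp Hstar‖})
    (hinfpos : 0 < sInf {r : ℝ | ∃ x : StrongDual ℝ Astar, r = ‖b0 - x.comp Hstar‖})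
    (hker : Hstar lhat = 0)
    (hnorm : ‖lhat‖ = 1)
    (hsup : b0 lhat = sSup {r : ℝ | ∃ l : Bstar, ‖l‖ ≤ 1 ∧ Hstar l = 0 ∧ r = |b0 l|})
    (hsuppos : 0 < sSup {r : ℝ | ∃ l : Bstar, ‖l‖ ≤ 1 ∧ Hstar l = 0 ∧ r = |b0 l|}) :
    (b0 - ahat.comp Hstar) lhat = ‖b0 - ahat.comp Hstar‖ ∧
      ((‖b0 - ahat.comp Hstar‖)⁻¹ • (b0 - ahat.comp Hstar)) lhat = ‖lhat‖ := by
  classical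
  set I : Set ℝ := {r : ℝ | ∃ x : StrongDual ℝ Astar, r = ‖b0 - x.comp Hstar‖} with hIdef
  set S : Set ℝ := {r : ℝ | ∃ l : Bstar, ‖l‖ ≤ 1 ∧ Hstar l = 0 ∧ r = |b0 l|} with hSdef
  have hzero : ∀ (x : StrongDual ℝ Astar) (l : Bstar), Hstar l = 0 → (x.comp Hstar) l = 0 := by
    intro x l hl
    simp [ContinuousLinearMap.comp_apply, hl]
  have hInonempty : I.Nonempty := ⟨‖b0 - (0 : StrongDual ℝ Astar).comp Hstar‖, 0, rfl⟩
  have hSnonempty : (0 : ℝ) ∈ S := ⟨0, by simp⟩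
  have hSbdd : BddAbove S := by
    refine ⟨‖b0‖, ?_⟩
    rintro r ⟨l, hl1, hl2, rfl⟩
    calc |b0 l| ≤ ‖b0‖ * ‖l‖ := b0.le_opNorm l
    _ ≤ ‖b0‖ * 1 := by gcongr
    _ = ‖b0‖ := mul_one _
  have hs0nonneg : (0 : ℝ) ≤ sSup S := le_csSup hSbdd hSnonempty
  -- easy direction: sSup S ≤ sInf I
  have hsle : sSup S ≤ sInf I := by
    refine csSup_le ⟨0, hSnonempty⟩ ?_
    rintro r ⟨l, hl1, hl2, rfl⟩
    refine le_csInf hInonempty ?_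
    rintro r' ⟨x, rfl⟩
    have h1 : |b0 l| = |(b0 - x.comp Hstar) l| := by
      simp [ContinuousLinearMap.sub_apply, hzero x l hl2]
    calc |b0 l| = ‖(b0 - x.comp Hstar) l‖ := by rw [h1]; rfl
    _ ≤ ‖b0 - x.comp Hstar‖ * ‖l‖ := (b0 - x.comp Hstar).le_opNorm l
    _ ≤ ‖b0 - x.comp Hstar‖ * 1 := by gcongr
    _ = ‖b0 - x.comp Hstar‖ := mul_one _
  -- hard direction: sInf I ≤ sSup S
  have hdle : sInf I ≤ sSup S := by
    by_contra hlt
    push_neg at hlt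
    -- bound for b0 on the kernel
    have hbound : ∀ l : Bstar, Hstar l = 0 → |b0 l| ≤ sSup S * ‖l‖ := by
      intro l hl
      rcases eq_or_ne l 0 with rfl | hne
      · simp
      · have hn : (0 : ℝ) < ‖l‖ := norm_pos_iff.2 hne
        have h1 : |b0 (‖l‖⁻¹ • l)| ≤ sSup S := by
          refine le_csSup hSbdd ⟨‖l‖⁻¹ • l, ?_, by simp [hl], rfl⟩
          simp [norm_smul, abs_of_nonneg (inv_nonneg.2 hn.le), inv_mul_cancel₀ hn.ne']
        have h2 : |b0 (‖l‖⁻¹ • l)| = ‖l‖⁻¹ * |b0 l| := by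
          rw [map_smul, smul_eq_mul, abs_mul, abs_of_nonneg (inv_nonneg.2 hn.le)]
        rw [h2] at h1
        calc |b0 l| = ‖l‖ * (‖l‖⁻¹ * |b0 l|) := by field_simp
        _ ≤ ‖l‖ * sSup S := by gcongr
        _ = sSup S * ‖l‖ := mul_comm _ _
    -- Hahn-Banach extension of b0 from the kernel
    set N : Submodule ℝ Bstar := LinearMap.ker (Hstar : Bstar →ₗ[ℝ] Astar) with hNdef
    set g : N →L[ℝ] ℝ := b0.comp (Submodule.subtypeL N) with hgdef
    obtain ⟨cext, hcext, hcnorm⟩ := exists_extension_norm_eq N g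
    have hgnorm : ‖g‖ ≤ sSup S := by
      refine ContinuousLinearMap.opNorm_le_bound g hs0nonneg ?_
      intro x
      have hx : Hstar (x : Bstar) = 0 := x.2
      have := hbound (x : Bstar) hx
      simpa [hgdef, Real.norm_eq_abs] using this
    have hcle : ‖cext‖ ≤ sSup S := by rw [hcnorm]; exact hgnorm
    -- b0 - cext lies in the weak*-closed subspace M
    set G : StrongDual ℝ Astar →ₗ[ℝ] StrongDual ℝ Bstar :=
      { toFun := fun x => x.comp Hstar
        map_add' := by intro a b; ext m; simp
        map_smul' := by intro a b; ext m; simp } with hGdef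
    have hrange : (Set.range fun x : StrongDual ℝ Astar => x.comp Hstar)
        = ↑(LinearMap.range G) := by
      ext y; simp [hGdef, LinearMap.mem_range, Set.mem_range, eq_comm]
    have hmemM : b0 - cext ∈ closure (Set.range fun x : StrongDual ℝ Astar => x.comp Hstar) := by
      by_contra hnot
      haveI : LocallyConvexSpace ℝ (WeakDual ℝ Bstar) :=
        WeakBilin.locallyConvexSpace (B := topDualPairing ℝ Bstar)
      set e := (StrongDual.toWeakDual (𝕜 := ℝ) (E := Bstar))
      set Msub : Submodule ℝ (StrongDual ℝ Bstar) := (LinearMap.range G).topologicalClosure with hMsub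
      have hMcar : (Msub : Set (StrongDual ℝ Bstar))
          = closure (Set.range fun x : StrongDual ℝ Astar => x.comp Hstar) := by
        rw [hrange]; rfl
      set Tsub : Submodule ℝ (WeakDual ℝ Bstar) := Msub.map (e : StrongDual ℝ Bstar →ₗ[ℝ] WeakDual ℝ Bstar)
        with hTsub
      have hTcar : (Tsub : Set (WeakDual ℝ Bstar))
          = ⇑e '' closure (Set.range fun x : StrongDual ℝ Astar => x.comp Hstar) := by
        rw [← hMcar]; rfl
      have hTclosed : IsClosed (Tsub : Set (WeakDual ℝ Bstar)) := by rw [hTcar]; exact hM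
      have hz : e (b0 - cext) ∉ (Tsub : Set (WeakDual ℝ Bstar)) := by
        rw [hTcar]
        intro hmem
        obtain ⟨w, hw, hwe⟩ := hmem
        exact hnot (e.injective hwe ▸ hw)
      obtain ⟨f, u, hfu, huz⟩ :=
        geometric_hahn_banach_closed_point (Tsub.convex) hTclosed hz
      have hu0 : 0 < u := by
        have h0 : f 0 < u := hfu 0 (Submodule.zero_mem Tsub)
        simpa using h0
      have hfvanish : ∀ a ∈ Tsub, f a = 0 := by
        intro a ha
        by_contra hfa
        have hmem : ((u + 1) / f a) • a ∈ Tsub := Submodule.smul_mem _ _ ha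
        have := hfu _ hmem
        rw [map_smul, smul_eq_mul, div_mul_cancel₀ _ hfa] at this
        linarith
      obtain ⟨l, hl⟩ := weakdual_dual_eval' f
      -- l is in the kernel of Hstar
      have hlker : Hstar l = 0 := by
        refine NormedSpace.eq_zero_of_forall_dual_eq_zero ℝ ?_
        intro x
        have hx : e (x.comp Hstar) ∈ (Tsub : Set (WeakDual ℝ Bstar)) := by
          rw [hTcar]
          exact ⟨x.comp Hstar, subset_closure ⟨x, rfl⟩, rfl⟩
        have h1 : f (e (x.comp Hstar)) = 0 := hfvanish _ hx
        rw [hl] at h1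
        have h2 : (x.comp Hstar) l = 0 := h1
        rw [ContinuousLinearMap.comp_apply] at h2
        exact h2
      -- but then f (e (b0 - cext)) = 0, contradiction
      have hlval : (b0 - cext) l = 0 := by
        have h1 : cext l = b0 l := by
          have := hcext ⟨l, hlker⟩
          simpa [hgdef] using this
        simp [ContinuousLinearMap.sub_apply, h1]
      have h2 : f (e (b0 - cext)) = 0 := by
        rw [hl]
        exact hlval
      rw [h2] at huz
      linarith
    -- conclude: distance ≤ ‖cext‖ ≤ sSup S < sInf I, contradiction
    obtain ⟨w, hw, hwdist⟩ := Metric.mem_closure_iff.1 hmemM (sInf I - sSup S)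
      (by linarith)
    obtain ⟨x, rfl⟩ := hw
    have h3 : ‖b0 - x.comp Hstar‖ < sInf I := by
      have h4 : ‖(b0 - cext) - x.comp Hstar‖ < sInf I - sSup S := by
        rw [← dist_eq_norm]; exact hwdist
      calc ‖b0 - x.comp Hstar‖ = ‖((b0 - cext) - x.comp Hstar) + cext‖ := by congr 1; abel
      _ ≤ ‖(b0 - cext) - x.comp Hstar‖ + ‖cext‖ := norm_add_le _ _
      _ < (sInf I - sSup S) + sSup S := by exact add_lt_add_of_lt_of_le h4 hcle
      _ = sInf I := by ring
    have h5 : sInf I ≤ ‖b0 - x.comp Hstar‖ := csInf_le ⟨0, by rintro r ⟨y, rfl⟩; exact norm_nonneg _⟩ ⟨x, rfl⟩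
    linarith
  have heq : sSup S = sInf I := le_antisymm hsle hdle
  have hmain : (b0 - ahat.comp Hstar) lhat = ‖b0 - ahat.comp Hstar‖ := by
    rw [ContinuousLinearMap.sub_apply, hzero ahat lhat hker, sub_zero, hsup, heq, hinf]
  refine ⟨hmain, ?_⟩
  rw [ContinuousLinearMap.smul_apply, hmain, smul_eq_mul, hnorm]
  have hpos : (0 : ℝ) < ‖b0 - ahat.comp Hstar‖ := by rw [hinf]; exact hinfpos
  field_simp
end

section
/- Let A_* be a separable real Banach space with continuous dual A = (A_*)*, and let N be a closed subspace of A_*. Define the annihilator N^⊥ := { x ∈ A : x(ℓ) = 0 for all ℓ ∈ N }. If a ∈ A with a ∉ N^⊥, then there exists a' ∈ N^⊥ such that ‖a − a'‖_A = dist(a, N^⊥) := inf{ ‖a − x‖_A : x ∈ N^⊥ }. -/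
open NormedSpace

/-- distance from a dual vector to the annihilator of a closed subspace
of a separable Banach space is attained. -/
theorem stmt_4
    {Astar : Type*} [NormedAddCommGroup Astar] [NormedSpace ℝ Astar]
    [CompleteSpace Astar] [TopologicalSpace.SeparableSpace Astar]
    (N : Subspace ℝ Astar) (hN : IsClosed (N : Set Astar))
    (a : StrongDual ℝ Astar)
    (ha : a ∉ {x : StrongDual ℝ Astar | ∀ l ∈ N, x l = 0}) :
    ∃ a' ∈ {x : StrongDual ℝ Astar | ∀ l ∈ N, x l = 0},
      ‖a - a'‖ =
        sInf {r : ℝ | ∃ x ∈ {x : StrongDual ℝ Astar | ∀ l ∈ N, x l = 0}, r = ‖a - x‖} := by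
  classical
  set R : Set ℝ := {r : ℝ | ∃ x ∈ {x : StrongDual ℝ Astar | ∀ l ∈ N, x l = 0}, r = ‖a - x‖} with hR
  have hRne : R.Nonempty := ⟨‖a - 0‖, 0, fun l _ => rfl, rfl⟩
  have hRbdd : BddBelow R := ⟨0, by rintro r ⟨x, -, rfl⟩; positivity⟩
  set d : ℝ := sInf R with hd
  -- the annihilator, viewed in the weak-* dual
  set Ann : Set (WeakDual ℝ Astar) := {x | ∀ l ∈ N, x l = 0} with hAnn
  have hAnnClosed : IsClosed Ann := by
    have : Ann = ⋂ l ∈ N, {x : WeakDual ℝ Astar | x l = 0} := by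
      ext x; simp [hAnn]
    rw [this]
    exact isClosed_biInter fun l _ =>
      isClosed_eq (WeakDual.eval_continuous l) continuous_const
  -- the nested compact sets
  set T : ℕ → Set (WeakDual ℝ Astar) := fun n =>
    Ann ∩ (WeakDual.toStrongDual ⁻¹' Metric.closedBall a (d + 1 / (n + 1))) with hT
  have hTclosed : ∀ n, IsClosed (T n) := fun n =>
    hAnnClosed.inter (WeakDual.isClosed_closedBall a _)
  have hTcompact : ∀ n, IsCompact (T n) := fun n =>
    (WeakDual.isCompact_closedBall (𝕜 := ℝ) (E := Astar) a _).inter_left hAnnClosed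
  have hTne : ∀ n, (T n).Nonempty := by
    intro n
    have hlt : d < d + 1 / (n + 1) := by
      have : (0:ℝ) < 1 / (n + 1) := by positivity
      linarith
    obtain ⟨r, ⟨x, hx, rfl⟩, hr⟩ := (csInf_lt_iff hRbdd hRne).mp hlt
    refine ⟨WeakDual.toStrongDual.symm x, hx, ?_⟩
    simp only [Set.mem_preimage, Metric.mem_closedBall]
    rw [dist_eq_norm]
    calc ‖(WeakDual.toStrongDual (WeakDual.toStrongDual.symm x) : StrongDual ℝ Astar) - a‖
        = ‖a - x‖ := by rw [LinearEquiv.apply_symm_apply]; exact norm_sub_rev _ _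
      _ ≤ d + 1 / (n + 1) := hr.le
  have hTmono : ∀ n, T (n + 1) ⊆ T n := by
    intro n x ⟨hx1, hx2⟩
    refine ⟨hx1, ?_⟩
    simp only [Set.mem_preimage, Metric.mem_closedBall] at hx2 ⊢
    have : (1:ℝ) / ((n:ℝ) + 1 + 1) ≤ 1 / ((n:ℝ) + 1) :=
      one_div_le_one_div_of_le (by positivity) (by linarith)
    push_cast at hx2 ⊢
    linarith
  obtain ⟨x, hx⟩ := IsCompact.nonempty_iInter_of_sequence_nonempty_isCompact_isClosed
    T hTmono hTne (hTcompact 0) hTclosed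
  simp only [Set.mem_iInter] at hx
  have hxAnn : ∀ l ∈ N, x l = 0 := (hx 0).1
  set x' : StrongDual ℝ Astar := WeakDual.toStrongDual x with hx'
  have hle : ‖a - x'‖ ≤ d := by
    refine le_of_forall_pos_le_add fun ε hε => ?_
    obtain ⟨n, hn⟩ := exists_nat_one_div_lt hε
    have := (hx n).2
    simp only [Set.mem_preimage, Metric.mem_closedBall, dist_eq_norm] at this
    calc ‖a - x'‖ = ‖x' - a‖ := norm_sub_rev _ _
      _ ≤ d + 1 / (n + 1) := this
      _ ≤ d + ε := by push_cast; linarith [hn]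
  have hge : d ≤ ‖a - x'‖ := csInf_le hRbdd ⟨x', hxAnn, rfl⟩
  exact ⟨x', hxAnn, le_antisymm hle hge⟩
end

section
/- Let A_* and B_* be real normed spaces with B_* a separable Banach space, let A = (A_*)* and B = (B_*)* be their continuous duals, let H_* : B_* → A_* be a bounded linear operator with adjoint H := (H_*)* : A → B, and let b0 ∈ B. Assume the norm-closure M of the range of H in B is closed in the weak* topology of B. Then the infimum is attained on M: there exists b̂ ∈ M such that ‖b0 − b̂‖_B = inf{ ‖b0 − Ha‖_B : a ∈ A }. -/
open NormedSpace

/-- the infimum in the best approximation problem is attained on the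
norm-closure `M` of the range of `H = (H_*)^*`, in the pre-dual setting. -/
theorem stmt_5
    {Astar Bstar : Type*} [NormedAddCommGroup Astar] [NormedSpace ℝ Astar]
    [NormedAddCommGroup Bstar] [NormedSpace ℝ Bstar]
    [CompleteSpace Bstar] [TopologicalSpace.SeparableSpace Bstar]
    (Hstar : Bstar →L[ℝ] Astar) (b0 : StrongDual ℝ Bstar)
    (hM : IsClosed (⇑(StrongDual.toWeakDual (𝕜 := ℝ) (E := Bstar)) ''
      closure (Set.range fun x : StrongDual ℝ Astar => x.comp Hstar))) :
    ∃ bhat ∈ closure (Set.range fun x : StrongDual ℝ Astar => x.comp Hstar),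
      ‖b0 - bhat‖ = sInf {r : ℝ | ∃ x : StrongDual ℝ Astar, r = ‖b0 - x.comp Hstar‖} := by
  set S : Set (StrongDual ℝ Bstar) := Set.range fun x : StrongDual ℝ Astar => x.comp Hstar with hS
  set T : Set ℝ := {r : ℝ | ∃ x : StrongDual ℝ Astar, r = ‖b0 - x.comp Hstar‖} with hT
  set d : ℝ := sInf T with hd
  have hTne : T.Nonempty := ⟨‖b0 - (0 : StrongDual ℝ Astar).comp Hstar‖, 0, rfl⟩
  have hTbdd : BddBelow T := ⟨0, fun r ⟨x, hx⟩ => hx ▸ norm_nonneg _⟩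
  -- d is a lower bound on ‖b0 - y‖ for y ∈ closure S
  have hd_le : ∀ y ∈ closure S, d ≤ ‖b0 - y‖ := by
    have hcl : closure S ⊆ {y : StrongDual ℝ Bstar | d ≤ ‖b0 - y‖} := by
      apply closure_minimal
      · rintro y ⟨x, rfl⟩
        exact csInf_le hTbdd ⟨x, rfl⟩
      · exact isClosed_le continuous_const (by fun_prop)
    exact fun y hy => hcl hy
  -- the nested compact family
  set Mw : Set (WeakDual ℝ Bstar) :=
    ⇑(StrongDual.toWeakDual (𝕜 := ℝ) (E := Bstar)) '' closure S with hMw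
  set K : ℕ → Set (WeakDual ℝ Bstar) := fun n =>
    Mw ∩ (WeakDual.toStrongDual ⁻¹' Metric.closedBall b0 (d + 1 / (n + 1))) with hK
  have hKclosed : ∀ n, IsClosed (K n) := fun n =>
    hM.inter (WeakDual.isClosed_closedBall b0 _)
  have hKcompact : ∀ n, IsCompact (K n) := by
    intro n
    apply WeakDual.isCompact_of_bounded_of_closed _ (hKclosed n)
    have : StrongDual.toWeakDual ⁻¹' K n ⊆ Metric.closedBall b0 (d + 1 / (n + 1)) := by
      intro y hy; exact hy.2
    exact (Metric.isBounded_closedBall).subset this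
  have hKne : ∀ n, (K n).Nonempty := by
    intro n
    have hpos : (0 : ℝ) < 1 / ((n : ℝ) + 1) := by positivity
    obtain ⟨r, ⟨x, hx⟩, hr⟩ := Real.lt_sInf_add_pos hTne hpos
    refine ⟨StrongDual.toWeakDual (x.comp Hstar), ⟨x.comp Hstar, subset_closure ⟨x, rfl⟩, rfl⟩, ?_⟩
    simp only [Set.mem_preimage, Metric.mem_closedBall]
    rw [dist_eq_norm, norm_sub_rev]
    exact le_of_lt (hx ▸ hr)
  have hKanti : ∀ m n : ℕ, m ≤ n → K n ⊆ K m := by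
    intro m n hmn
    apply Set.inter_subset_inter_right
    apply Set.preimage_mono
    apply Metric.closedBall_subset_closedBall
    have : (1 : ℝ) / (n + 1) ≤ 1 / (m + 1) := by
      apply one_div_le_one_div_of_le (by positivity)
      exact_mod_cast by omega
    linarith
  have hdir : Directed (· ⊇ ·) K := fun m n =>
    ⟨max m n, hKanti m _ (le_max_left m n), hKanti n _ (le_max_right m n)⟩
  obtain ⟨bw, hbw⟩ :=
    IsCompact.nonempty_iInter_of_directed_nonempty_isCompact_isClosed K hdir hKne
      hKcompact hKclosed
  simp only [Set.mem_iInter] at hbw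
  -- extract the minimizer
  obtain ⟨bhat, hbhatM, hbhat_eq⟩ := (hbw 0).1
  refine ⟨bhat, hbhatM, ?_⟩
  have hub : ∀ n : ℕ, ‖b0 - bhat‖ ≤ d + 1 / (n + 1) := by
    intro n
    have h2 := (hbw n).2
    simp only [Set.mem_preimage, Metric.mem_closedBall] at h2
    have : dist (WeakDual.toStrongDual bw) b0 = ‖b0 - bhat‖ := by
      rw [dist_eq_norm, norm_sub_rev]
      rw [← hbhat_eq]; rfl
    linarith [this ▸ h2]
  have hle : ‖b0 - bhat‖ ≤ d := by
    by_contra h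
    push_neg at h
    obtain ⟨n, hn⟩ := exists_nat_one_div_lt (sub_pos.mpr h)
    have := hub n
    linarith
  exact le_antisymm hle (hd_le bhat hbhatM)
end

section
/- Let X, Y and Z be real Banach spaces, let A : X → Y and B : X → Z be bounded linear operators with adjoints A* : Y* → X* and B* : Z* → X*, let y0 ∈ Y and ρ > 0. Then inf{ ‖y0 − Ax‖_Y + ρ‖Bx‖_Z : x ∈ X } = sup{ |λ(y0)| : λ ∈ Y*, μ ∈ Z*, max{‖λ‖_{Y*}, ‖μ‖_{Z*}} ≤ 1, A*λ + ρ B*μ = 0 }. -/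
open NormedSpace

set_option maxHeartbeats 1000000 in
/-- duality formula for the regularized extremal problem, `p = 1`. -/
theorem stmt_8
    {X Y Z : Type*} [NormedAddCommGroup X] [NormedSpace ℝ X] [CompleteSpace X]
    [NormedAddCommGroup Y] [NormedSpace ℝ Y] [CompleteSpace Y]
    [NormedAddCommGroup Z] [NormedSpace ℝ Z] [CompleteSpace Z]
    (A : X →L[ℝ] Y) (B : X →L[ℝ] Z) (y0 : Y) (ρ : ℝ) (hρ : 0 < ρ) :
    sInf {r : ℝ | ∃ x : X, r = ‖y0 - A x‖ + ρ * ‖B x‖} =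
      sSup {r : ℝ | ∃ lam : StrongDual ℝ Y, ∃ mu : StrongDual ℝ Z,
        max ‖lam‖ ‖mu‖ ≤ 1 ∧ lam.comp A + ρ • mu.comp B = 0 ∧ r = |lam y0|} := by
  set P := {r : ℝ | ∃ x : X, r = ‖y0 - A x‖ + ρ * ‖B x‖} with hPdef
  set Q := {r : ℝ | ∃ lam : StrongDual ℝ Y, ∃ mu : StrongDual ℝ Z,
      max ‖lam‖ ‖mu‖ ≤ 1 ∧ lam.comp A + ρ • mu.comp B = 0 ∧ r = |lam y0|} with hQdef
  have hQ0 : (0 : ℝ) ∈ Q := ⟨0, 0, by simp, by simp, by simp⟩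
  have hQbdd : BddAbove Q := by
    refine ⟨‖y0‖, ?_⟩
    rintro r ⟨lam, mu, hmax, -, rfl⟩
    have h1 : ‖lam y0‖ ≤ ‖lam‖ * ‖y0‖ := lam.le_opNorm y0
    rw [Real.norm_eq_abs] at h1
    have h2 : ‖lam‖ ≤ 1 := le_trans (le_max_left _ _) hmax
    nlinarith [norm_nonneg y0, norm_nonneg lam]
  have hPne : P.Nonempty := ⟨‖y0 - A 0‖ + ρ * ‖B 0‖, 0, rfl⟩
  have hPbdd : BddBelow P := by
    refine ⟨0, ?_⟩
    rintro r ⟨x, rfl⟩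
    positivity
  have key : ∀ q ∈ Q, ∀ p ∈ P, q ≤ p := by
    rintro q ⟨lam, mu, hmax, hker, rfl⟩ p ⟨x, rfl⟩
    have hl : ‖lam‖ ≤ 1 := le_trans (le_max_left _ _) hmax
    have hm : ‖mu‖ ≤ 1 := le_trans (le_max_right _ _) hmax
    have hx : lam (A x) + ρ * mu (B x) = 0 := by
      have h := congrFun (congrArg DFunLike.coe hker) x
      simpa using h
    have h1 : lam y0 = lam (y0 - A x) - ρ * mu (B x) := by
      rw [map_sub]; linarith
    have h2 : |lam (y0 - A x)| ≤ ‖y0 - A x‖ := by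
      have := lam.le_opNorm (y0 - A x)
      rw [Real.norm_eq_abs] at this
      nlinarith [norm_nonneg (y0 - A x), norm_nonneg lam]
    have h3 : |mu (B x)| ≤ ‖B x‖ := by
      have := mu.le_opNorm (B x)
      rw [Real.norm_eq_abs] at this
      nlinarith [norm_nonneg (B x), norm_nonneg mu]
    have h4 : |lam y0| ≤ |lam (y0 - A x)| + ρ * |mu (B x)| := by
      rw [h1]
      calc |lam (y0 - A x) - ρ * mu (B x)|
          ≤ |lam (y0 - A x)| + |ρ * mu (B x)| := abs_sub _ _
        _ = |lam (y0 - A x)| + ρ * |mu (B x)| := by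
            rw [abs_mul, abs_of_pos hρ]
    nlinarith
  refine le_antisymm ?_ (le_csInf hPne fun p hp => csSup_le ⟨0, hQ0⟩ fun q hq => key q hq p hp)
  by_cases hd0 : sInf P ≤ 0
  · exact hd0.trans (le_csSup hQbdd hQ0)
  push_neg at hd0
  -- hard direction
  set W := WithLp 1 (Y × Z) with hWdef
  set E := WithLp.prodContinuousLinearEquiv 1 ℝ Y Z with hEdef
  set T : X →L[ℝ] W := E.symm.toContinuousLinearMap.comp (A.prod (ρ • B)) with hTdef
  set w0 : W := E.symm (y0, 0) with hw0def
  set S : Submodule ℝ W := LinearMap.range (T : X →ₗ[ℝ] W) with hSdef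
  set Sc : Submodule ℝ W := S.topologicalClosure with hScdef
  haveI hScClosed : IsClosed (Sc : Set W) := S.isClosed_topologicalClosure
  have hnormW : ∀ v : W, ‖v‖ = ‖v.fst‖ + ‖v.snd‖ := fun v => by
    rw [WithLp.prod_norm_eq_add (by norm_num)]
    norm_num
  have hwT : ∀ x : X, ‖w0 - T x‖ = ‖y0 - A x‖ + ρ * ‖B x‖ := by
    intro x
    have h1 : (w0 - T x).fst = y0 - A x := rfl
    have h2 : (w0 - T x).snd = (0 : Z) - ρ • B x := rfl
    rw [hnormW, h1, h2, zero_sub, norm_neg, norm_smul, Real.norm_eq_abs, abs_of_pos hρ]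
  have hmkle : ∀ v : W, ‖Sc.mkQ v‖ ≤ ‖v‖ := fun v => Submodule.Quotient.norm_mk_le Sc v
  have hmem : ∀ x : X, T x ∈ Sc := fun x => Submodule.le_topologicalClosure S ⟨x, rfl⟩
  have hmk0 : ∀ x : X, Sc.mkQ (T x) = 0 := fun x => (Submodule.Quotient.mk_eq_zero _).2 (hmem x)
  have hq_le : ‖Sc.mkQ w0‖ ≤ sInf P := by
    refine le_csInf hPne ?_
    rintro p ⟨x, rfl⟩
    calc ‖Sc.mkQ w0‖ = ‖Sc.mkQ (w0 - T x)‖ := by rw [map_sub, hmk0, sub_zero]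
      _ ≤ ‖w0 - T x‖ := hmkle _
      _ = ‖y0 - A x‖ + ρ * ‖B x‖ := hwT x
  have hle_q : sInf P ≤ ‖Sc.mkQ w0‖ := by
    refine le_of_forall_pos_le_add fun ε hε => ?_
    obtain ⟨m, hm, hmlt⟩ := Submodule.Quotient.norm_mk_lt (Sc.mkQ w0) (half_pos hε)
    have hm' : (Submodule.Quotient.mk m : W ⧸ Sc) = Submodule.Quotient.mk w0 := by
      simpa using hm
    have hsub : w0 - m ∈ Sc := by
      have := (Submodule.Quotient.eq Sc).1 hm'
      simpa using Sc.neg_mem this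
    have hcl : (w0 - m) ∈ closure (S : Set W) := by
      rw [← S.topologicalClosure_coe]
      exact hsub
    obtain ⟨s, hsS, hclose⟩ := Metric.mem_closure_iff.1 hcl (ε / 2) (half_pos hε)
    obtain ⟨x, rfl⟩ := hsS
    have hPle : sInf P ≤ ‖y0 - A x‖ + ρ * ‖B x‖ := csInf_le hPbdd ⟨x, rfl⟩
    rw [← hwT x] at hPle
    have heq : w0 - T x = m + ((w0 - m) - T x) := by abel
    have hdist : ‖(w0 - m) - T x‖ < ε / 2 := by
      rw [← dist_eq_norm]; exact hclose
    calc sInf P ≤ ‖w0 - T x‖ := hPle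
      _ ≤ ‖m‖ + ‖(w0 - m) - T x‖ := by rw [heq]; exact norm_add_le _ _
      _ ≤ ‖Sc.mkQ w0‖ + ε := by linarith
  have hqnorm : ‖Sc.mkQ w0‖ = sInf P := le_antisymm hq_le hle_q
  have hne : Sc.mkQ w0 ≠ 0 := by
    intro h
    rw [h, norm_zero] at hqnorm
    linarith
  obtain ⟨g, hg1, hg2⟩ := exists_dual_vector ℝ (Sc.mkQ w0) (norm_ne_zero_iff.mpr hne)
  have hg2' : g (Sc.mkQ w0) = ‖Sc.mkQ w0‖ := by simpa using hg2
  set mkC : W →L[ℝ] (W ⧸ Sc) :=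
    LinearMap.mkContinuous Sc.mkQ 1 (fun v => by simpa using hmkle v) with hmkCdef
  set f : W →L[ℝ] ℝ := g.comp mkC with hfdef
  have hf_apply : ∀ v : W, f v = g (Sc.mkQ v) := fun v => rfl
  have hf_le : ∀ v : W, |f v| ≤ ‖v‖ := fun v => by
    have h1 : ‖f v‖ ≤ ‖g‖ * ‖Sc.mkQ v‖ := by
      rw [hf_apply]; exact g.le_opNorm _
    rw [Real.norm_eq_abs, hg1, one_mul] at h1
    exact h1.trans (hmkle v)
  set lam : StrongDual ℝ Y :=
    f.comp (E.symm.toContinuousLinearMap.comp (ContinuousLinearMap.inl ℝ Y Z)) with hlamdef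
  set mu : StrongDual ℝ Z :=
    f.comp (E.symm.toContinuousLinearMap.comp (ContinuousLinearMap.inr ℝ Y Z)) with hmudef
  have hlam_apply : ∀ y : Y, lam y = f (E.symm (y, 0)) := fun _ => rfl
  have hmu_apply : ∀ z : Z, mu z = f (E.symm (0, z)) := fun _ => rfl
  have hlam_norm : ‖lam‖ ≤ 1 := by
    refine lam.opNorm_le_bound zero_le_one fun y => ?_
    rw [Real.norm_eq_abs, one_mul]
    have h1 : ‖(E.symm (y, (0 : Z)) : W)‖ = ‖y‖ := by
      have h2 : ((E.symm (y, (0 : Z)) : W)).fst = y := rfl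
      have h3 : ((E.symm (y, (0 : Z)) : W)).snd = (0 : Z) := rfl
      rw [hnormW, h2, h3, norm_zero, add_zero]
    rw [hlam_apply, ← h1]
    exact hf_le _
  have hmu_norm : ‖mu‖ ≤ 1 := by
    refine mu.opNorm_le_bound zero_le_one fun z => ?_
    rw [Real.norm_eq_abs, one_mul]
    have h1 : ‖(E.symm ((0 : Y), z) : W)‖ = ‖z‖ := by
      have h2 : ((E.symm ((0 : Y), z) : W)).fst = (0 : Y) := rfl
      have h3 : ((E.symm ((0 : Y), z) : W)).snd = z := rfl
      rw [hnormW, h2, h3, norm_zero, zero_add]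
    rw [hmu_apply, ← h1]
    exact hf_le _
  have hker : lam.comp A + ρ • mu.comp B = 0 := by
    ext x
    have hTx0 : f (T x) = 0 := by rw [hf_apply, hmk0 x, map_zero]
    have hsplit : (T x : W) = E.symm (A x, 0) + E.symm (0, ρ • B x) := by
      rw [← map_add]
      have : (A x, (0:Z)) + ((0:Y), ρ • B x) = (A x, ρ • B x) := by simp
      rw [this]
      rfl
    have hsum : lam (A x) + mu (ρ • B x) = 0 := by
      rw [hlam_apply, hmu_apply, ← map_add, ← hsplit, hTx0]
    have hmusmul : mu (ρ • B x) = ρ * mu (B x) := by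
      rw [map_smul]; rfl
    simp only [ContinuousLinearMap.add_apply, ContinuousLinearMap.coe_smul',
      Pi.smul_apply, ContinuousLinearMap.comp_apply, ContinuousLinearMap.zero_apply,
      smul_eq_mul]
    rw [hmusmul] at hsum
    linarith
  have hlam_y0 : lam y0 = sInf P := by
    have h1 : lam y0 = f w0 := rfl
    rw [h1, hf_apply, hg2', hqnorm]
  have hmemQ : sInf P ∈ Q := by
    refine ⟨lam, mu, max_le hlam_norm hmu_norm, hker, ?_⟩
    rw [hlam_y0, abs_of_pos hd0]
  exact le_csSup hQbdd hmemQ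
end

section
/- Let X, Y and Z be real Banach spaces, let A : X → Y and B : X → Z be bounded linear operators with adjoints A* : Y* → X* and B* : Z* → X*, let y0 ∈ Y, ρ > 0, and let p, p' ∈ (1, ∞) satisfy 1/p + 1/p' = 1. Then inf{ (‖y0 − Ax‖_Y^p + ρ‖Bx‖_Z^p)^{1/p} : x ∈ X } = sup{ |λ(y0)| : λ ∈ Y*, μ ∈ Z*, (‖λ‖_{Y*}^{p'} + ‖μ‖_{Z*}^{p'})^{1/p'} ≤ 1, A*λ + ρ^{1/p} B*μ = 0 }. -/
open NormedSpace Metric Set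
open scoped ENNReal

section aux

variable {Y Z : Type*} [NormedAddCommGroup Y] [NormedSpace ℝ Y]
  [NormedAddCommGroup Z] [NormedSpace ℝ Z]

/-- approximate norming vector for a real functional -/
lemma exists_approx_norming {W : Type*} [NormedAddCommGroup W] [NormedSpace ℝ W]
    (f : W →L[ℝ] ℝ) {δ : ℝ} (hδ : 0 < δ) : ∃ w : W, ‖w‖ ≤ 1 ∧ ‖f‖ - δ ≤ f w := by
  obtain ⟨w, hw, hfw⟩ := f.exists_lt_apply_of_lt_opNorm (sub_lt_self ‖f‖ hδ)
  rcases le_or_gt 0 (f w) with h | h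
  · refine ⟨w, hw.le, ?_⟩
    rw [Real.norm_eq_abs, abs_of_nonneg h] at hfw
    exact hfw.le
  · refine ⟨-w, by simpa using hw.le, ?_⟩
    rw [map_neg]
    rw [Real.norm_eq_abs, abs_of_neg h] at hfw
    linarith

noncomputable def pairFunc (q : ℝ≥0∞) [Fact (1 ≤ q)] (lam : Y →L[ℝ] ℝ) (mu : Z →L[ℝ] ℝ) :
    WithLp q (Y × Z) →L[ℝ] ℝ :=
  (lam.comp (ContinuousLinearMap.fst ℝ Y Z) + mu.comp (ContinuousLinearMap.snd ℝ Y Z)).comp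
    (WithLp.prodContinuousLinearEquiv q ℝ Y Z).toContinuousLinearMap

lemma pairFunc_apply (q : ℝ≥0∞) [Fact (1 ≤ q)] (lam : Y →L[ℝ] ℝ) (mu : Z →L[ℝ] ℝ)
    (f : WithLp q (Y × Z)) : pairFunc q lam mu f = lam f.fst + mu f.snd := rfl

lemma prodLp_norm {p : ℝ} (hp : 0 < p) [Fact (1 ≤ ENNReal.ofReal p)]
    (f : WithLp (ENNReal.ofReal p) (Y × Z)) :
    ‖f‖ = (‖f.fst‖ ^ p + ‖f.snd‖ ^ p) ^ (1 / p) := by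
  have h : (ENNReal.ofReal p).toReal = p := ENNReal.toReal_ofReal hp.le
  rw [WithLp.prod_norm_eq_add (by rw [h]; exact hp), h]

lemma pairFunc_norm_le {p p' : ℝ} (hpq : Real.HolderConjugate p p')
    [Fact (1 ≤ ENNReal.ofReal p)] (lam : Y →L[ℝ] ℝ) (mu : Z →L[ℝ] ℝ) :
    ‖pairFunc (ENNReal.ofReal p) lam mu‖ ≤ (‖lam‖ ^ p' + ‖mu‖ ^ p') ^ (1 / p') := by
  apply ContinuousLinearMap.opNorm_le_bound
  · positivity
  intro f
  rw [pairFunc_apply, prodLp_norm hpq.pos]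
  have h1 : |lam f.fst + mu f.snd| ≤ ‖f.fst‖ * ‖lam‖ + ‖f.snd‖ * ‖mu‖ := by
    refine (abs_add_le _ _).trans (add_le_add ?_ ?_)
    · rw [mul_comm]; exact lam.le_opNorm _
    · rw [mul_comm]; exact mu.le_opNorm _
  refine h1.trans ?_
  have H := Real.inner_le_Lp_mul_Lq_of_nonneg (Finset.univ : Finset (Fin 2))
      (f := ![‖f.fst‖, ‖f.snd‖]) (g := ![‖lam‖, ‖mu‖]) hpq
      (fun i _ => by fin_cases i <;> simp)
      (fun i _ => by fin_cases i <;> simp)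
  simp only [Fin.sum_univ_two, Matrix.cons_val_zero, Matrix.cons_val_one, Matrix.head_cons] at H
  calc ‖f.fst‖ * ‖lam‖ + ‖f.snd‖ * ‖mu‖
      ≤ (‖f.fst‖ ^ p + ‖f.snd‖ ^ p) ^ (1 / p) * (‖lam‖ ^ p' + ‖mu‖ ^ p') ^ (1 / p') := H
    _ = (‖lam‖ ^ p' + ‖mu‖ ^ p') ^ (1 / p') * (‖f.fst‖ ^ p + ‖f.snd‖ ^ p) ^ (1 / p) := mul_comm _ _

lemma le_pairFunc_norm {p p' : ℝ} (hpq : Real.HolderConjugate p p')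
    [Fact (1 ≤ ENNReal.ofReal p)] (lam : Y →L[ℝ] ℝ) (mu : Z →L[ℝ] ℝ) :
    (‖lam‖ ^ p' + ‖mu‖ ^ p') ^ (1 / p') ≤ ‖pairFunc (ENNReal.ofReal p) lam mu‖ := by
  set Λ := pairFunc (ENNReal.ofReal p) lam mu with hΛ
  have key : ∀ a b : ℝ, 0 ≤ a → 0 ≤ b →
      a * ‖lam‖ + b * ‖mu‖ ≤ ‖Λ‖ * (a ^ p + b ^ p) ^ (1 / p) := by
    intro a b ha hb
    refine le_of_forall_pos_le_add fun ε hε => ?_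
    have hab1 : 0 < a + b + 1 := by linarith
    set δ := ε / (a + b + 1) with hδdef
    have hδ : 0 < δ := div_pos hε hab1
    obtain ⟨y, hy1, hy2⟩ := exists_approx_norming lam hδ
    obtain ⟨z, hz1, hz2⟩ := exists_approx_norming mu hδ
    set v : WithLp (ENNReal.ofReal p) (Y × Z) :=
      (WithLp.prodContinuousLinearEquiv (ENNReal.ofReal p) ℝ Y Z).symm (a • y, b • z) with hv
    have hv1 : (v.fst : Y) = a • y := rfl
    have hv2 : (v.snd : Z) = b • z := rfl
    have hΛv : Λ v = a * lam y + b * mu z := by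
      rw [pairFunc_apply, hv1, hv2, map_smul, map_smul, smul_eq_mul, smul_eq_mul]
    have hvnorm : ‖v‖ ≤ (a ^ p + b ^ p) ^ (1 / p) := by
      rw [prodLp_norm hpq.pos]
      have h1 : ‖(v.fst : Y)‖ ≤ a := by
        rw [hv1, norm_smul, Real.norm_eq_abs, abs_of_nonneg ha]
        calc a * ‖y‖ ≤ a * 1 := mul_le_mul_of_nonneg_left hy1 ha
          _ = a := mul_one a
      have h2 : ‖(v.snd : Z)‖ ≤ b := by
        rw [hv2, norm_smul, Real.norm_eq_abs, abs_of_nonneg hb]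
        calc b * ‖z‖ ≤ b * 1 := mul_le_mul_of_nonneg_left hz1 hb
          _ = b := mul_one b
      apply Real.rpow_le_rpow (add_nonneg (Real.rpow_nonneg (norm_nonneg _) _)
        (Real.rpow_nonneg (norm_nonneg _) _)) _ hpq.one_div_nonneg
      exact add_le_add (Real.rpow_le_rpow (norm_nonneg _) h1 hpq.nonneg)
        (Real.rpow_le_rpow (norm_nonneg _) h2 hpq.nonneg)
    have hle : a * ‖lam‖ + b * ‖mu‖ ≤ Λ v + (a + b) * δ := by
      have h1' : a * ‖lam‖ ≤ a * (lam y + δ) := mul_le_mul_of_nonneg_left (by linarith) ha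
      have h2' : b * ‖mu‖ ≤ b * (mu z + δ) := mul_le_mul_of_nonneg_left (by linarith) hb
      calc a * ‖lam‖ + b * ‖mu‖ ≤ a * (lam y + δ) + b * (mu z + δ) := add_le_add h1' h2'
        _ = (a * lam y + b * mu z) + (a + b) * δ := by ring
        _ = Λ v + (a + b) * δ := by rw [hΛv]
    have hΛvle : Λ v ≤ ‖Λ‖ * (a ^ p + b ^ p) ^ (1 / p) := by
      calc Λ v ≤ |Λ v| := le_abs_self _
        _ ≤ ‖Λ‖ * ‖v‖ := Λ.le_opNorm v
        _ ≤ ‖Λ‖ * (a ^ p + b ^ p) ^ (1 / p) := by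
            exact mul_le_mul_of_nonneg_left hvnorm (norm_nonneg _)
    have habδ : (a + b) * δ ≤ ε := by
      rw [hδdef]
      rw [div_eq_inv_mul, ← mul_assoc]
      calc (a + b) * (a + b + 1)⁻¹ * ε ≤ 1 * ε := by
            apply mul_le_mul_of_nonneg_right _ hε.le
            rw [← div_eq_mul_inv, div_le_one hab1]; linarith
        _ = ε := one_mul ε
    linarith
  -- apply key with special a, b
  have h2 := key (‖lam‖ ^ (p' - 1)) (‖mu‖ ^ (p' - 1))
    (Real.rpow_nonneg (norm_nonneg _) _) (Real.rpow_nonneg (norm_nonneg _) _)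
  have hp'1 : p' - 1 + 1 ≠ 0 := by simp; exact hpq.symm.ne_zero
  have hp'ne : p' ≠ 0 := hpq.symm.ne_zero
  have e1 : ∀ c : ℝ, 0 ≤ c → c ^ (p' - 1) * c = c ^ p' := by
    intro c hc
    have := Real.rpow_add' hc (show (p' - 1) + 1 ≠ 0 by simpa using hp'ne)
    rw [sub_add_cancel, Real.rpow_one] at this
    exact this.symm
  have e2 : ∀ c : ℝ, 0 ≤ c → (c ^ (p' - 1)) ^ p = c ^ p' := by
    intro c hc
    rw [← Real.rpow_mul hc, hpq.symm.sub_one_mul_conj]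
  rw [e1 _ (norm_nonneg _), e1 _ (norm_nonneg _), e2 _ (norm_nonneg _), e2 _ (norm_nonneg _)]
    at h2
  set S := ‖lam‖ ^ p' + ‖mu‖ ^ p' with hS
  have hSnn : 0 ≤ S := by positivity
  rcases eq_or_lt_of_le hSnn with hS0 | hS0
  · rw [← hS0, Real.zero_rpow (by simpa using hp'ne)]
    exact norm_nonneg _
  · have hSp : 0 < S ^ (1 / p) := Real.rpow_pos_of_pos hS0 _
    have expand : S ^ (1 / p') = S / S ^ (1 / p) := by
      have h1p : 1 / p' = 1 - 1 / p := by
        have := hpq.inv_add_inv_eq_one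
        rw [one_div, one_div]; linarith
      rw [h1p, Real.rpow_sub hS0, Real.rpow_one]
    rw [expand, div_le_iff₀ hSp]
    exact h2

lemma pairFunc_norm {p p' : ℝ} (hpq : Real.HolderConjugate p p')
    [Fact (1 ≤ ENNReal.ofReal p)] (lam : Y →L[ℝ] ℝ) (mu : Z →L[ℝ] ℝ) :
    ‖pairFunc (ENNReal.ofReal p) lam mu‖ = (‖lam‖ ^ p' + ‖mu‖ ^ p') ^ (1 / p') :=
  le_antisymm (pairFunc_norm_le hpq lam mu) (le_pairFunc_norm hpq lam mu)

end aux

set_option maxHeartbeats 1000000 in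
/-- duality formula for the regularized extremal problem, `1 < p < ∞`. -/
theorem stmt_9
    {X Y Z : Type*} [NormedAddCommGroup X] [NormedSpace ℝ X] [CompleteSpace X]
    [NormedAddCommGroup Y] [NormedSpace ℝ Y] [CompleteSpace Y]
    [NormedAddCommGroup Z] [NormedSpace ℝ Z] [CompleteSpace Z]
    (A : X →L[ℝ] Y) (B : X →L[ℝ] Z) (y0 : Y) (ρ : ℝ) (hρ : 0 < ρ)
    (p p' : ℝ) (hp : 1 < p) (hp' : 1 < p') (hpp' : 1 / p + 1 / p' = 1) :
    sInf {r : ℝ | ∃ x : X, r = (‖y0 - A x‖ ^ p + ρ * ‖B x‖ ^ p) ^ (1 / p)} =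
      sSup {r : ℝ | ∃ lam : StrongDual ℝ Y, ∃ mu : StrongDual ℝ Z,
        (‖lam‖ ^ p' + ‖mu‖ ^ p') ^ (1 / p') ≤ 1 ∧
        lam.comp A + ρ ^ (1 / p) • mu.comp B = 0 ∧ r = |lam y0|} := by
  have hq : p.HolderConjugate p' := Real.holderConjugate_iff.mpr ⟨hp, by rw [inv_eq_one_div, inv_eq_one_div]; exact hpp'⟩
  haveI : Fact (1 ≤ ENNReal.ofReal p) :=
    ⟨by rw [← ENNReal.ofReal_one]; exact ENNReal.ofReal_le_ofReal hp.le⟩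
  set S := {r : ℝ | ∃ x : X, r = (‖y0 - A x‖ ^ p + ρ * ‖B x‖ ^ p) ^ (1 / p)} with hSdef
  set T := {r : ℝ | ∃ lam : StrongDual ℝ Y, ∃ mu : StrongDual ℝ Z,
        (‖lam‖ ^ p' + ‖mu‖ ^ p') ^ (1 / p') ≤ 1 ∧
        lam.comp A + ρ ^ (1 / p) • mu.comp B = 0 ∧ r = |lam y0|} with hTdef
  set eqv := WithLp.prodContinuousLinearEquiv (ENNReal.ofReal p) ℝ Y Z with heqv
  set C : X →L[ℝ] WithLp (ENNReal.ofReal p) (Y × Z) :=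
    eqv.symm.toContinuousLinearMap.comp (A.prod ((ρ ^ (1 / p)) • B)) with hCdef
  set v : WithLp (ENNReal.ofReal p) (Y × Z) := eqv.symm (y0, 0) with hvdef
  have hρp : 0 < ρ ^ (1 / p) := Real.rpow_pos_of_pos hρ _
  -- the norm computation
  have hCx : ∀ x : X, ‖v - C x‖ = (‖y0 - A x‖ ^ p + ρ * ‖B x‖ ^ p) ^ (1 / p) := by
    intro x
    have h1 : ((v - C x).fst : Y) = y0 - A x := rfl
    have h2 : ((v - C x).snd : Z) = 0 - ρ ^ (1 / p) • B x := rfl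
    rw [prodLp_norm hq.pos, h1, h2, zero_sub, norm_neg, norm_smul, Real.norm_eq_abs,
      abs_of_pos hρp]
    congr 2
    rw [Real.mul_rpow hρp.le (norm_nonneg _), ← Real.rpow_mul hρ.le,
      one_div_mul_cancel hq.ne_zero, Real.rpow_one]
  have hS0 : S.Nonempty := ⟨_, ⟨0, rfl⟩⟩
  have hSnn : ∀ s ∈ S, (0:ℝ) ≤ s := by
    rintro s ⟨x, rfl⟩
    positivity
  have hbddS : BddBelow S := ⟨0, hSnn⟩
  have h0T : (0:ℝ) ∈ T := by
    refine ⟨0, 0, ?_, by simp, by simp⟩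
    simp only [norm_zero]
    rw [Real.zero_rpow hq.symm.ne_zero, add_zero,
      Real.zero_rpow (one_div_ne_zero hq.symm.ne_zero)]
    exact zero_le_one
  -- weak duality
  have weak : ∀ r ∈ T, ∀ s ∈ S, r ≤ s := by
    rintro r ⟨lam, mu, hnorm, hann, rfl⟩ s ⟨x, rfl⟩
    set Λ := pairFunc (ENNReal.ofReal p) lam mu with hΛdef
    have hΛnorm : ‖Λ‖ ≤ 1 := le_trans (pairFunc_norm_le hq lam mu) hnorm
    have hannx : lam (A x) + ρ ^ (1 / p) * mu (B x) = 0 := by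
      have := DFunLike.congr_fun hann x
      simpa using this
    have hΛC : Λ (C x) = 0 := by
      have e1 : ((C x).fst : Y) = A x := rfl
      have e2 : ((C x).snd : Z) = ρ ^ (1 / p) • B x := rfl
      rw [pairFunc_apply, e1, e2, map_smul, smul_eq_mul]
      exact hannx
    have hval : lam y0 = Λ (v - C x) := by
      rw [map_sub, hΛC, sub_zero, pairFunc_apply]
      have e1 : ((v).fst : Y) = y0 := rfl
      have e2 : ((v).snd : Z) = 0 := rfl
      rw [e1, e2, map_zero, add_zero]
    calc |lam y0| = |Λ (v - C x)| := by rw [hval]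
      _ ≤ ‖Λ‖ * ‖v - C x‖ := Λ.le_opNorm _
      _ ≤ 1 * ‖v - C x‖ := mul_le_mul_of_nonneg_right hΛnorm (norm_nonneg _)
      _ = (‖y0 - A x‖ ^ p + ρ * ‖B x‖ ^ p) ^ (1 / p) := by rw [one_mul, hCx]
  have hbddT : BddAbove T := by
    obtain ⟨s0, hs0⟩ := hS0
    exact ⟨s0, fun r hr => weak r hr s0 hs0⟩
  refine le_antisymm ?_ (csSup_le ⟨0, h0T⟩ fun r hr => le_csInf hS0 (weak r hr))
  -- strong duality
  by_cases hd : 0 < sInf S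
  · -- the closed subspace and quotient
    set M : Submodule ℝ (WithLp (ENNReal.ofReal p) (Y × Z)) := (LinearMap.range (C : X →ₗ[ℝ] WithLp (ENNReal.ofReal p) (Y × Z))).topologicalClosure with hM
    haveI hMc : IsClosed (M : Set (WithLp (ENNReal.ofReal p) (Y × Z))) :=
      (LinearMap.range (C : X →ₗ[ℝ] WithLp (ENNReal.ofReal p) (Y × Z))).isClosed_topologicalClosure
    have hb : sInf S ≤ ‖(Submodule.Quotient.mk v : WithLp (ENNReal.ofReal p) (Y × Z) ⧸ M)‖ := by
      refine le_of_forall_pos_le_add fun ε hε => ?_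
      obtain ⟨m, hm, hmlt⟩ :=
        Submodule.Quotient.norm_mk_lt (Submodule.Quotient.mk v : WithLp (ENNReal.ofReal p) (Y × Z) ⧸ M)
          (half_pos hε)
      have hw : v - m ∈ M := (Submodule.Quotient.eq M).mp hm.symm
      have hwc : (v - m) ∈ closure (Set.range (C : X → WithLp (ENNReal.ofReal p) (Y × Z))) := by
        have h' : v - m ∈ (LinearMap.range (C : X →ₗ[ℝ] WithLp (ENNReal.ofReal p) (Y × Z))).topologicalClosure := hw
        rw [← SetLike.mem_coe, Submodule.topologicalClosure_coe, LinearMap.coe_range] at h'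
        exact h'
      obtain ⟨c, ⟨x, rfl⟩, hcd⟩ := Metric.mem_closure_iff.mp hwc (ε/2) (half_pos hε)
      have hx1 : ‖v - C x‖ ≤ ‖m‖ + ε/2 := by
        calc ‖v - C x‖ = ‖m + ((v - m) - C x)‖ := by congr 1; abel
          _ ≤ ‖m‖ + ‖(v - m) - C x‖ := norm_add_le _ _
          _ ≤ ‖m‖ + ε/2 := by
              have : dist (v - m) (C x) = ‖(v - m) - C x‖ := dist_eq_norm _ _
              linarith [this ▸ hcd.le]
      have hx2 : sInf S ≤ ‖v - C x‖ := csInf_le hbddS ⟨x, hCx x⟩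
      linarith
    have hmkne : (Submodule.Quotient.mk v : WithLp (ENNReal.ofReal p) (Y × Z) ⧸ M) ≠ 0 := by
      intro h
      rw [h, norm_zero] at hb
      linarith
    obtain ⟨g, hg1, hgv⟩ :=
      exists_dual_vector ℝ (Submodule.Quotient.mk v : WithLp (ENNReal.ofReal p) (Y × Z) ⧸ M) (norm_ne_zero_iff.mpr hmkne)
    set mkQL : WithLp (ENNReal.ofReal p) (Y × Z) →L[ℝ] (WithLp (ENNReal.ofReal p) (Y × Z) ⧸ M) :=
      LinearMap.mkContinuous M.mkQ 1
        (fun w => by simpa using Submodule.Quotient.norm_mk_le M w) with hmkQL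
    set Λ : WithLp (ENNReal.ofReal p) (Y × Z) →L[ℝ] ℝ := g.comp mkQL with hΛdef
    set lam : StrongDual ℝ Y :=
      Λ.comp (eqv.symm.toContinuousLinearMap.comp (ContinuousLinearMap.inl ℝ Y Z)) with hlam
    set mu : StrongDual ℝ Z :=
      Λ.comp (eqv.symm.toContinuousLinearMap.comp (ContinuousLinearMap.inr ℝ Y Z)) with hmu
    have hpair : pairFunc (ENNReal.ofReal p) lam mu = Λ := by
      ext f
      rw [pairFunc_apply]
      have hsum : ((f.fst, 0) : Y × Z) + (0, f.snd) = (f.fst, f.snd) := by simp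
      calc lam f.fst + mu f.snd = Λ (eqv.symm (f.fst, 0)) + Λ (eqv.symm (0, f.snd)) := rfl
        _ = Λ (eqv.symm ((f.fst, 0) + (0, f.snd))) := by rw [map_add eqv.symm, map_add Λ]
        _ = Λ (eqv.symm (f.fst, f.snd)) := by rw [hsum]
        _ = Λ f := rfl
    have hΛ1 : ‖Λ‖ ≤ 1 := by
      calc ‖Λ‖ ≤ ‖g‖ * ‖mkQL‖ := ContinuousLinearMap.opNorm_comp_le g mkQL
        _ ≤ 1 * 1 := by
            rw [hg1]
            exact mul_le_mul_of_nonneg_left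
              (LinearMap.mkContinuous_norm_le M.mkQ zero_le_one _) zero_le_one
        _ = 1 := one_mul 1
    have hΛv : Λ v = ‖(Submodule.Quotient.mk v : WithLp (ENNReal.ofReal p) (Y × Z) ⧸ M)‖ := by
      have : mkQL v = Submodule.Quotient.mk v := rfl
      rw [hΛdef]
      simp only [ContinuousLinearMap.comp_apply, this]
      exact_mod_cast hgv
    have hlamy0 : lam y0 = Λ v := rfl
    have hann : lam.comp A + ρ ^ (1 / p) • mu.comp B = 0 := by
      ext x
      have e0 : (lam.comp A + ρ ^ (1 / p) • mu.comp B) x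
          = lam (A x) + ρ ^ (1 / p) * mu (B x) := by simp
      have e1 : lam (A x) + ρ ^ (1 / p) * mu (B x) = pairFunc (ENNReal.ofReal p) lam mu (C x) := by
        have h1 : ((C x).fst : Y) = A x := rfl
        have h2 : ((C x).snd : Z) = ρ ^ (1 / p) • B x := rfl
        rw [pairFunc_apply, h1, h2, map_smul, smul_eq_mul]
      have hCxM : C x ∈ M := Submodule.le_topologicalClosure _ (LinearMap.mem_range_self (C : X →ₗ[ℝ] WithLp (ENNReal.ofReal p) (Y × Z)) x)
      have e2 : Λ (C x) = 0 := by
        have : mkQL (C x) = 0 := by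
          have : (Submodule.Quotient.mk (C x) : WithLp (ENNReal.ofReal p) (Y × Z) ⧸ M) = 0 :=
            (Submodule.Quotient.mk_eq_zero M).mpr hCxM
          exact this
        rw [hΛdef]
        simp only [ContinuousLinearMap.comp_apply, this, map_zero]
      rw [e0, e1, hpair, e2]
      simp
    have hmemT : ‖(Submodule.Quotient.mk v : WithLp (ENNReal.ofReal p) (Y × Z) ⧸ M)‖ ∈ T := by
      refine ⟨lam, mu, ?_, hann, ?_⟩
      · rw [← pairFunc_norm hq lam mu, hpair]
        exact hΛ1
      · rw [hlamy0, hΛv, abs_of_nonneg (norm_nonneg _)]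
    calc sInf S ≤ ‖(Submodule.Quotient.mk v : WithLp (ENNReal.ofReal p) (Y × Z) ⧸ M)‖ := hb
      _ ≤ sSup T := le_csSup hbddT hmemT
  · push_neg at hd
    have : sInf S = 0 := le_antisymm hd (le_csInf hS0 hSnn)
    rw [this]
    exact le_csSup hbddT h0T
end

section
/- Let X, Y and Z be real Banach spaces, let A : X → Y and B : X → Z be bounded linear operators with adjoints A*, B*, let y0 ∈ Y, ρ > 0, and let p, p' ∈ (1, ∞) satisfy 1/p + 1/p' = 1. Suppose x̂ ∈ X satisfies (‖y0 − Ax̂‖_Y^p + ρ‖Bx̂‖_Z^p)^{1/p} = inf{ (‖y0 − Ax‖_Y^p + ρ‖Bx‖_Z^p)^{1/p} : x ∈ X } > 0, and suppose λ̂ ∈ Y*, μ̂ ∈ Z* satisfy (‖λ̂‖_{Y*}^{p'} + ‖μ̂‖_{Z*}^{p'})^{1/p'} = 1, A*λ̂ + ρ^{1/p} B*μ̂ = 0, and λ̂(y0) = sup{ |λ(y0)| : λ ∈ Y*, μ ∈ Z*, (‖λ‖_{Y*}^{p'} + ‖μ‖_{Z*}^{p'})^{1/p'} ≤ 1, A*λ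 + ρ^{1/p} B*μ = 0 } > 0. Then: (1) if μ̂ = 0, then Bx̂ = 0 and ‖y0 − Ax̂‖_Y = λ̂(y0); (2) if λ̂ ≠ 0 and μ̂ ≠ 0, then y0 − Ax̂ ≠ 0, Bx̂ ≠ 0, the vector α(y0 − Ax̂) is norming for λ̂, and the vector β Bx̂ is norming for μ̂, where α := (1 + ‖μ̂‖_{Z*}^{p'}/‖λ̂‖_{Y*}^{p'})^{1/p} / λ̂(y0) and β := −ρ^{1/p}(1 + ‖λ̂‖_{Y*}^{p'}/‖μ̂‖_{Z*}^{p'})^{1/p} / λ̂(y0). -/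
open Real NormedSpace
open scoped ENNReal NNReal


-- strict weighted AM-GM
lemma gm_lt_am {c d θ : ℝ} (hc : 0 ≤ c) (hd : 0 ≤ d) (hθ : 0 < θ) (hθ1 : θ < 1)
    (hne : c ≠ d) : d ^ θ * c ^ (1 - θ) < θ * d + (1 - θ) * c := by
  rcases eq_or_lt_of_le hc with hc0 | hc0
  · -- c = 0
    have hd0 : 0 < d := hd.lt_of_ne (by rw [← hc0] at hne; exact hne)
    rw [← hc0, Real.zero_rpow (by linarith)]
    simpa using mul_pos hθ hd0
  · -- c > 0
    set r : ℝ := d / c with hr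
    have hr0 : 0 ≤ r := div_nonneg hd hc0.le
    have hrne : r ≠ 1 := by
      intro h
      exact hne ((div_eq_one_iff_eq hc0.ne').mp h).symm
    have key : r ^ θ < 1 + θ * (r - 1) := by
      have h1 : (-1 : ℝ) ≤ r ^ θ - 1 := by
        have := Real.rpow_nonneg hr0 θ; linarith
      have h2 : r ^ θ - 1 ≠ 0 := by
        intro h
        have hr1 : r ^ θ = 1 := by linarith
        have : (r ^ θ) ^ (1/θ) = (1:ℝ) ^ (1/θ) := by rw [hr1]
        rw [← Real.rpow_mul hr0, mul_one_div, div_self hθ.ne', Real.rpow_one,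
          Real.one_rpow] at this
        exact hrne this
      have h3 : (1:ℝ) < 1/θ := by
        rw [lt_div_iff₀ hθ]; linarith
      have := one_add_mul_self_lt_rpow_one_add h1 h2 h3
      rw [add_sub_cancel, ← Real.rpow_mul hr0,
        mul_one_div, div_self hθ.ne', Real.rpow_one] at this
      have h4 := mul_lt_mul_of_pos_left this hθ
      have h5 : θ * (1 + 1/θ * (r^θ - 1)) = θ + (r^θ - 1) := by field_simp
      linarith
    have hdc : d ^ θ * c ^ (1 - θ) = r ^ θ * c := by
      have hd' : d = r * c := by rw [hr, div_mul_cancel₀ d hc0.ne']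
      rw [hd', Real.mul_rpow hr0 hc0.le, mul_assoc, ← Real.rpow_add hc0]
      norm_num
    rw [hdc]
    calc r ^ θ * c < (1 + θ * (r - 1)) * c := mul_lt_mul_of_pos_right key hc0
      _ = θ * d + (1 - θ) * c := by rw [hr]; field_simp; ring

-- Young equality case
lemma young_eq {u a p p' : ℝ} (hp : 1 < p) (hp' : 1 < p') (hpp' : 1 / p + 1 / p' = 1)
    (hu : 0 ≤ u) (ha : 0 ≤ a) (heq : u * a = u ^ p' / p' + a ^ p / p) :
    a ^ p = u ^ p' := by
  by_contra hne
  set c := u ^ p' with hc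
  set d := a ^ p with hd
  have hc0 : 0 ≤ c := Real.rpow_nonneg hu _
  have hd0 : 0 ≤ d := Real.rpow_nonneg ha _
  have hθ : 0 < 1/p := by positivity
  have hθ1 : 1/p < 1 := by rw [div_lt_one (by linarith)]; linarith
  have h1p' : 1 - 1/p = 1/p' := by linarith
  have hlt := gm_lt_am hc0 hd0 hθ hθ1 (fun h => hne h.symm)
  rw [h1p'] at hlt
  have hgm : d ^ (1/p) * c ^ (1/p') = u * a := by
    rw [hc, hd, ← Real.rpow_mul ha, ← Real.rpow_mul hu,
      mul_one_div, mul_one_div, div_self (by linarith : p ≠ 0),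
      div_self (by linarith : p' ≠ 0), Real.rpow_one, Real.rpow_one, mul_comm]
  rw [hgm] at hlt
  rw [heq] at hlt
  rw [hc, hd] at hlt
  have : (1:ℝ)/p * a ^ p + 1/p' * u ^ p' = u ^ p' / p' + a ^ p / p := by ring
  linarith [hlt.trans_eq this]

-- two-term Hölder
lemma holder2 {p p' u v a b : ℝ} (hpq : p'.HolderConjugate p)
    (hu : 0 ≤ u) (hv : 0 ≤ v) (ha : 0 ≤ a) (hb : 0 ≤ b) :
    u * a + v * b ≤ (u ^ p' + v ^ p') ^ (1/p') * (a ^ p + b ^ p) ^ (1/p) := by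
  have h := Real.inner_le_Lp_mul_Lq_of_nonneg (s := (Finset.univ : Finset (Fin 2)))
    (f := ![u, v]) (g := ![a, b]) hpq
    (by intro i _; fin_cases i <;> simpa)
    (by intro i _; fin_cases i <;> simpa)
  simpa [Fin.sum_univ_two] using h


lemma dual_norm_bound {Y Z : Type*} [NormedAddCommGroup Y] [NormedSpace ℝ Y]
    [NormedAddCommGroup Z] [NormedSpace ℝ Z]
    {p p' : ℝ} (hp : 1 < p) (hp' : 1 < p') (hpp' : 1/p + 1/p' = 1)
    [Fact (1 ≤ ENNReal.ofReal p)]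
    (Λ : WithLp (ENNReal.ofReal p) (Y × Z) →L[ℝ] ℝ)
    (lam : Y →L[ℝ] ℝ) (mu : Z →L[ℝ] ℝ)
    (hlam : ∀ y, lam y = Λ ((WithLp.equiv (ENNReal.ofReal p) (Y × Z)).symm (y, 0)))
    (hmu : ∀ z, mu z = Λ ((WithLp.equiv (ENNReal.ofReal p) (Y × Z)).symm (0, z))) :
    (‖lam‖ ^ p' + ‖mu‖ ^ p') ^ (1/p') ≤ ‖Λ‖ := by
  have hp0 : (0:ℝ) < p := by linarith
  have hp'0 : (0:ℝ) < p' := by linarith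
  have htoReal : (ENNReal.ofReal p).toReal = p := ENNReal.toReal_ofReal hp0.le
  -- norm formula
  have hnorm : ∀ (y : Y) (z : Z),
      ‖(WithLp.equiv (ENNReal.ofReal p) (Y × Z)).symm (y, z)‖ = (‖y‖ ^ p + ‖z‖ ^ p) ^ (1/p) := by
    intro y z
    rw [WithLp.prod_norm_eq_add (by rw [htoReal]; exact hp0)]
    simp [htoReal]
  -- key claim
  have claim : ∀ s t : ℝ, 0 ≤ s → 0 ≤ t →
      s * ‖lam‖ + t * ‖mu‖ ≤ ‖Λ‖ * (s ^ p + t ^ p) ^ (1/p) := by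
    intro s t hs ht
    rcases eq_or_lt_of_le (add_nonneg hs ht) with hst | hst
    · have hs0 : s = 0 := by linarith
      have ht0 : t = 0 := by linarith
      rw [hs0, ht0]
      simp only [zero_mul, add_zero]
      positivity
    · apply le_of_forall_pos_le_add
      intro ε' hε'
      set ε : ℝ := ε' / (s + t) with hε
      have hεpos : 0 < ε := div_pos hε' hst
      -- get near-norming vectors
      obtain ⟨y, hy1, hy2⟩ := lam.exists_lt_apply_of_lt_opNorm
        (show ‖lam‖ - ε < ‖lam‖ by linarith)
      obtain ⟨z, hz1, hz2⟩ := mu.exists_lt_apply_of_lt_opNorm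
        (show ‖mu‖ - ε < ‖mu‖ by linarith)
      -- replace by sign-corrected versions
      obtain ⟨y', hy'1, hy'2⟩ : ∃ y' : Y, ‖y'‖ ≤ 1 ∧ ‖lam‖ - ε < lam y' := by
        rcases le_or_gt 0 (lam y) with h | h
        · exact ⟨y, hy1.le, by rwa [Real.norm_eq_abs, abs_of_nonneg h] at hy2⟩
        · exact ⟨-y, by simpa using hy1.le, by
            rw [map_neg]
            rwa [Real.norm_eq_abs, abs_of_neg h] at hy2⟩
      obtain ⟨z', hz'1, hz'2⟩ : ∃ z' : Z, ‖z'‖ ≤ 1 ∧ ‖mu‖ - ε < mu z' := by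
        rcases le_or_gt 0 (mu z) with h | h
        · exact ⟨z, hz1.le, by rwa [Real.norm_eq_abs, abs_of_nonneg h] at hz2⟩
        · exact ⟨-z, by simpa using hz1.le, by
            rw [map_neg]
            rwa [Real.norm_eq_abs, abs_of_neg h] at hz2⟩
      set e := (WithLp.equiv (ENNReal.ofReal p) (Y × Z)).symm (s • y', t • z') with he
      have heval : Λ e = s * lam y' + t * mu z' := by
        have hsplit : ((s • y', t • z') : Y × Z) = s • ((y', 0) : Y × Z) + t • ((0, z') : Y × Z) := by
          simp [Prod.ext_iff]
        rw [he, hsplit, WithLp.equiv_symm_apply, WithLp.toLp_add, WithLp.toLp_smul, WithLp.toLp_smul,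
          map_add, map_smul, map_smul, hlam, hmu]
        simp
      have hebound : ‖e‖ ≤ (s ^ p + t ^ p) ^ (1/p) := by
        rw [he, hnorm]
        apply Real.rpow_le_rpow (by positivity) _ (by positivity)
        have h1 : ‖s • y'‖ ^ p ≤ s ^ p := by
          apply Real.rpow_le_rpow (norm_nonneg _) _ hp0.le
          rw [norm_smul, Real.norm_eq_abs, abs_of_nonneg hs]
          nlinarith [norm_nonneg y']
        have h2 : ‖t • z'‖ ^ p ≤ t ^ p := by
          apply Real.rpow_le_rpow (norm_nonneg _) _ hp0.le
          rw [norm_smul, Real.norm_eq_abs, abs_of_nonneg ht]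
          nlinarith [norm_nonneg z']
        linarith
      have hΛe : Λ e ≤ ‖Λ‖ * (s ^ p + t ^ p) ^ (1/p) := by
        calc Λ e ≤ |Λ e| := le_abs_self _
          _ = ‖Λ e‖ := (Real.norm_eq_abs _).symm
          _ ≤ ‖Λ‖ * ‖e‖ := Λ.le_opNorm e
          _ ≤ ‖Λ‖ * (s ^ p + t ^ p) ^ (1/p) :=
              mul_le_mul_of_nonneg_left hebound (norm_nonneg _)
      have hA : s * (‖lam‖ - ε) + t * (‖mu‖ - ε) ≤ Λ e := by
        rw [heval]
        have h1 : s * (‖lam‖ - ε) ≤ s * lam y' := mul_le_mul_of_nonneg_left hy'2.le hs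
        have h2 : t * (‖mu‖ - ε) ≤ t * mu z' := mul_le_mul_of_nonneg_left hz'2.le ht
        linarith
      have hεst : (s + t) * ε = ε' := by
        rw [hε]; field_simp
      have hexp : s * ‖lam‖ + t * ‖mu‖ = s * (‖lam‖ - ε) + t * (‖mu‖ - ε) + (s + t) * ε := by
        ring
      rw [hexp, hεst]
      linarith
  -- apply claim with the conjugate-power weights
  set u := ‖lam‖ with hu
  set v := ‖mu‖ with hv
  have hu0 : 0 ≤ u := norm_nonneg _
  have hv0 : 0 ≤ v := norm_nonneg _
  have powmul : ∀ x : ℝ, 0 ≤ x → x ^ (p'-1) * x = x ^ p' := by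
    intro x hx
    rcases eq_or_lt_of_le hx with hx0 | hx0
    · rw [← hx0, Real.zero_rpow (by linarith), Real.zero_rpow (by linarith), zero_mul]
    · rw [← Real.rpow_add_one hx0.ne', sub_add_cancel]
  have hconj : (p'-1) * p = p' := by
    have h1 : p ≠ 0 := hp0.ne'
    have h2 : p' ≠ 0 := hp'0.ne'
    field_simp at hpp'
    nlinarith [hpp']
  have powp : ∀ x : ℝ, 0 ≤ x → (x ^ (p'-1)) ^ p = x ^ p' := by
    intro x hx
    rw [← Real.rpow_mul hx, hconj]
  have key := claim (u ^ (p'-1)) (v ^ (p'-1))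
    (Real.rpow_nonneg hu0 _) (Real.rpow_nonneg hv0 _)
  rw [powp u hu0, powp v hv0, mul_comm (u ^ (p'-1)) u, mul_comm (v ^ (p'-1)) v] at key
  rw [mul_comm u (u ^ (p'-1)), mul_comm v (v ^ (p'-1))] at key
  rw [powmul u hu0, powmul v hv0] at key
  set K := u ^ p' + v ^ p' with hK
  have hK0 : 0 ≤ K := by positivity
  rcases eq_or_lt_of_le hK0 with hKz | hKpos
  · rw [← hKz, Real.zero_rpow (by positivity : (1:ℝ)/p' ≠ 0)]
    exact norm_nonneg _
  · have hKp : 0 < K ^ ((1:ℝ)/p) := Real.rpow_pos_of_pos hKpos _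
    have hdecomp : K ^ ((1:ℝ)/p') * K ^ ((1:ℝ)/p) = K := by
      rw [← Real.rpow_add hKpos]
      rw [show (1:ℝ)/p' + 1/p = 1 by linarith, Real.rpow_one]
    calc K ^ ((1:ℝ)/p') = K / K ^ ((1:ℝ)/p) := by
          rw [eq_div_iff hKp.ne', hdecomp]
      _ ≤ ‖Λ‖ := by
          rw [div_le_iff₀ hKp]
          exact key


lemma exists_dual_pair {X Y Z : Type*} [NormedAddCommGroup X] [NormedSpace ℝ X]
    [NormedAddCommGroup Y] [NormedSpace ℝ Y]
    [NormedAddCommGroup Z] [NormedSpace ℝ Z]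
    (A : X →L[ℝ] Y) (B : X →L[ℝ] Z) (y0 : Y) (ρ : ℝ) (hρ : 0 < ρ)
    (p p' : ℝ) (hp : 1 < p) (hp' : 1 < p') (hpp' : 1 / p + 1 / p' = 1)
    (hSpos : 0 < sInf {r : ℝ | ∃ x : X, r = (‖y0 - A x‖ ^ p + ρ * ‖B x‖ ^ p) ^ (1 / p)}) :
    ∃ lam : StrongDual ℝ Y, ∃ mu : StrongDual ℝ Z,
      (‖lam‖ ^ p' + ‖mu‖ ^ p') ^ (1 / p') ≤ 1 ∧
      lam.comp A + ρ ^ (1 / p) • mu.comp B = 0 ∧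
      lam y0 = sInf {r : ℝ | ∃ x : X, r = (‖y0 - A x‖ ^ p + ρ * ‖B x‖ ^ p) ^ (1 / p)} := by
  have hp0 : (0:ℝ) < p := by linarith
  haveI : Fact (1 ≤ ENNReal.ofReal p) :=
    ⟨by rw [ENNReal.one_le_ofReal]; linarith⟩
  set P : ℝ≥0∞ := ENNReal.ofReal p with hP
  have htoReal : P.toReal = p := ENNReal.toReal_ofReal hp0.le
  set Sset := {r : ℝ | ∃ x : X, r = (‖y0 - A x‖ ^ p + ρ * ‖B x‖ ^ p) ^ (1 / p)} with hSset
  set S := sInf Sset with hSdef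
  -- the product space
  have hnormE : ∀ (y : Y) (z : Z),
      ‖(WithLp.equiv P (Y × Z)).symm (y, z)‖ = (‖y‖ ^ p + ‖z‖ ^ p) ^ (1/p) := by
    intro y z
    rw [WithLp.prod_norm_eq_add (by rw [htoReal]; exact hp0)]
    simp [htoReal]
  set B' : X →L[ℝ] Z := ρ ^ (1/p) • B with hB'
  set T : X →L[ℝ] WithLp P (Y × Z) :=
    ((WithLp.prodContinuousLinearEquiv P ℝ Y Z).symm : (Y × Z) →L[ℝ] WithLp P (Y × Z)).comp
      (A.prod B') with hT
  have hTapp : ∀ x : X, T x = (WithLp.equiv P (Y × Z)).symm (A x, ρ ^ (1/p) • B x) := by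
    intro x; rfl
  set M : Submodule ℝ (WithLp P (Y × Z)) := LinearMap.range (T.toLinearMap) with hM
  set N : Submodule ℝ (WithLp P (Y × Z)) := M.topologicalClosure with hN
  haveI hNclosed : IsClosed (N : Set (WithLp P (Y × Z))) := M.isClosed_topologicalClosure
  have hMN : M ≤ N := M.le_topologicalClosure
  set e0 : WithLp P (Y × Z) := (WithLp.equiv P (Y × Z)).symm (y0, 0) with he0
  -- value computation
  have hρp : (ρ ^ ((1:ℝ)/p)) ^ p = ρ := by
    rw [← Real.rpow_mul hρ.le, one_div_mul_cancel hp0.ne', Real.rpow_one]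
  have hval : ∀ x : X, ‖e0 - T x‖ = (‖y0 - A x‖ ^ p + ρ * ‖B x‖ ^ p) ^ (1/p) := by
    intro x
    have : e0 - T x = (WithLp.equiv P (Y × Z)).symm (y0 - A x, -(ρ ^ (1/p) • B x)) := by
      rw [he0, hTapp, WithLp.equiv_symm_apply, ← WithLp.toLp_sub]
      congr 1
      simp [Prod.ext_iff]
    rw [this, hnormE]
    congr 1
    rw [norm_neg, norm_smul, Real.norm_eq_abs,
      abs_of_pos (Real.rpow_pos_of_pos hρ _),
      Real.mul_rpow (Real.rpow_pos_of_pos hρ _).le (norm_nonneg _), hρp]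
  have hSsetne : Sset.Nonempty := ⟨_, ⟨0, rfl⟩⟩
  have hSsetbdd : BddBelow Sset := by
    refine ⟨0, fun r hr => ?_⟩
    obtain ⟨x, rfl⟩ := hr
    positivity
  -- quotient
  set mkCLM : WithLp P (Y × Z) →L[ℝ] (WithLp P (Y × Z) ⧸ N) :=
    LinearMap.mkContinuous N.mkQ 1
      (fun x => by simpa using Submodule.Quotient.norm_mk_le N x) with hmkCLM
  have hmk_apply : ∀ e, mkCLM e = Submodule.Quotient.mk e := fun e => rfl
  have hmkT : ∀ x : X, (Submodule.Quotient.mk (T x) : WithLp P (Y × Z) ⧸ N) = 0 := by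
    intro x
    rw [Submodule.Quotient.mk_eq_zero]
    exact hMN ⟨x, rfl⟩
  -- the quotient norm of e0 equals S
  have hq : ‖(Submodule.Quotient.mk e0 : WithLp P (Y × Z) ⧸ N)‖ = S := by
    apply le_antisymm
    · -- ≤ every element of Sset
      apply le_csInf hSsetne
      intro r hr
      obtain ⟨x, rfl⟩ := hr
      have h1 : (Submodule.Quotient.mk e0 : WithLp P (Y × Z) ⧸ N) =
          Submodule.Quotient.mk (e0 - T x) := by
        rw [Submodule.Quotient.eq]
        simpa using hMN ⟨x, rfl⟩
      rw [h1, ← hval x]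
      exact Submodule.Quotient.norm_mk_le N _
    · apply le_of_forall_pos_le_add
      intro ε hε
      obtain ⟨m, hm, hmlt⟩ := Submodule.Quotient.norm_mk_lt
        (Submodule.Quotient.mk e0 : WithLp P (Y × Z) ⧸ N) (half_pos hε)
      have hn : e0 - m ∈ N := by
        have h := (Submodule.Quotient.eq N).mp hm
        simpa [neg_sub] using N.neg_mem h
      have hn' : (e0 - m) ∈ closure (M : Set (WithLp P (Y × Z))) := by
        rw [← Submodule.topologicalClosure_coe]
        exact hn
      obtain ⟨n', hn'M, hdist⟩ := Metric.mem_closure_iff.mp hn' (ε/2) (half_pos hε)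
      obtain ⟨x, hx'⟩ := hn'M
      have hx : T x = n' := hx'
      have hr : ‖e0 - T x‖ ∈ Sset := ⟨x, hval x⟩
      have h2 : S ≤ ‖e0 - T x‖ := csInf_le hSsetbdd hr
      have h3 : ‖e0 - T x‖ ≤ ‖m‖ + ε/2 := by
        have : e0 - T x = m + ((e0 - m) - n') := by rw [hx]; abel
        rw [this]
        calc ‖m + ((e0 - m) - n')‖ ≤ ‖m‖ + ‖(e0 - m) - n'‖ := norm_add_le _ _
          _ ≤ ‖m‖ + ε/2 := by
              rw [dist_eq_norm] at hdist
              linarith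
      linarith
  -- Hahn-Banach
  have hmk_ne : (Submodule.Quotient.mk e0 : WithLp P (Y × Z) ⧸ N) ≠ 0 := by
    intro h
    rw [h, norm_zero] at hq
    exact absurd hq.symm (ne_of_gt hSpos)
  obtain ⟨g, hg1, hg2⟩ := exists_dual_vector ℝ _ (norm_ne_zero_iff.mpr hmk_ne)
  set Λ : WithLp P (Y × Z) →L[ℝ] ℝ := g.comp mkCLM with hΛ
  have hΛnorm : ‖Λ‖ ≤ 1 := by
    apply ContinuousLinearMap.opNorm_le_bound _ zero_le_one
    intro e
    calc ‖Λ e‖ = ‖g (mkCLM e)‖ := rfl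
      _ ≤ ‖g‖ * ‖mkCLM e‖ := g.le_opNorm _
      _ = ‖mkCLM e‖ := by rw [hg1, one_mul]
      _ ≤ ‖e‖ := by
          rw [hmk_apply]
          exact Submodule.Quotient.norm_mk_le N e
      _ = 1 * ‖e‖ := (one_mul _).symm
  have hΛT : ∀ x : X, Λ (T x) = 0 := by
    intro x
    calc Λ (T x) = g (Submodule.Quotient.mk (T x)) := rfl
      _ = g 0 := by rw [hmkT]
      _ = 0 := map_zero g
  have hΛe0 : Λ e0 = S := by
    calc Λ e0 = g (Submodule.Quotient.mk e0) := rfl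
      _ = ‖(Submodule.Quotient.mk e0 : WithLp P (Y × Z) ⧸ N)‖ := hg2
      _ = S := hq
  -- the dual pair
  set lam : StrongDual ℝ Y := Λ.comp
    (((WithLp.prodContinuousLinearEquiv P ℝ Y Z).symm :
        (Y × Z) →L[ℝ] WithLp P (Y × Z)).comp (ContinuousLinearMap.inl ℝ Y Z)) with hlam
  set mu : StrongDual ℝ Z := Λ.comp
    (((WithLp.prodContinuousLinearEquiv P ℝ Y Z).symm :
        (Y × Z) →L[ℝ] WithLp P (Y × Z)).comp (ContinuousLinearMap.inr ℝ Y Z)) with hmu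
  have hlamapp : ∀ y : Y, lam y = Λ ((WithLp.equiv P (Y × Z)).symm (y, 0)) := fun y => rfl
  have hmuapp : ∀ z : Z, mu z = Λ ((WithLp.equiv P (Y × Z)).symm (0, z)) := fun z => rfl
  refine ⟨lam, mu, ?_, ?_, ?_⟩
  · calc (‖lam‖ ^ p' + ‖mu‖ ^ p') ^ (1/p') ≤ ‖Λ‖ :=
        dual_norm_bound hp hp' hpp' Λ lam mu hlamapp hmuapp
      _ ≤ 1 := hΛnorm
  · ext x
    have h1 : (lam.comp A + ρ ^ (1/p) • mu.comp B) x =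
        lam (A x) + ρ ^ (1/p) * mu (B x) := rfl
    rw [h1, hlamapp, hmuapp]
    have h2 : ρ ^ ((1:ℝ)/p) * Λ ((WithLp.equiv P (Y × Z)).symm (0, B x)) =
        Λ (ρ ^ ((1:ℝ)/p) • (WithLp.equiv P (Y × Z)).symm (0, B x)) := by
      rw [map_smul]; rfl
    rw [h2, WithLp.equiv_symm_apply, ← WithLp.toLp_smul, ← map_add, ← WithLp.toLp_add]
    have h3 : ((A x, (0:Z)) : Y × Z) + ρ ^ ((1:ℝ)/p) • ((0:Y), B x) =
        (A x, ρ ^ ((1:ℝ)/p) • B x) := by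
      simp [Prod.ext_iff]
    rw [h3, ← WithLp.equiv_symm_apply, ← hTapp, hΛT]
    rfl
  · rw [hlamapp, ← he0, hΛe0]

set_option maxHeartbeats 1000000 in
/-- solutions of the regularized extremal problem (`1 < p < ∞`) via
norming vectors associated with a dual solution. -/
theorem stmt_10
    {X Y Z : Type*} [NormedAddCommGroup X] [NormedSpace ℝ X] [CompleteSpace X]
    [NormedAddCommGroup Y] [NormedSpace ℝ Y] [CompleteSpace Y]
    [NormedAddCommGroup Z] [NormedSpace ℝ Z] [CompleteSpace Z]
    (A : X →L[ℝ] Y) (B : X →L[ℝ] Z) (y0 : Y) (ρ : ℝ) (hρ : 0 < ρ)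
    (p p' : ℝ) (hp : 1 < p) (hp' : 1 < p') (hpp' : 1 / p + 1 / p' = 1)
    (xhat : X) (lamhat : StrongDual ℝ Y) (muhat : StrongDual ℝ Z)
    (hinf : (‖y0 - A xhat‖ ^ p + ρ * ‖B xhat‖ ^ p) ^ (1 / p) =
      sInf {r : ℝ | ∃ x : X, r = (‖y0 - A x‖ ^ p + ρ * ‖B x‖ ^ p) ^ (1 / p)})
    (hinfpos : 0 < sInf {r : ℝ | ∃ x : X, r = (‖y0 - A x‖ ^ p + ρ * ‖B x‖ ^ p) ^ (1 / p)})
    (hnorm1 : (‖lamhat‖ ^ p' + ‖muhat‖ ^ p') ^ (1 / p') = 1)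
    (hker : lamhat.comp A + ρ ^ (1 / p) • muhat.comp B = 0)
    (hsup : lamhat y0 =
      sSup {r : ℝ | ∃ lam : StrongDual ℝ Y, ∃ mu : StrongDual ℝ Z,
        (‖lam‖ ^ p' + ‖mu‖ ^ p') ^ (1 / p') ≤ 1 ∧
        lam.comp A + ρ ^ (1 / p) • mu.comp B = 0 ∧ r = |lam y0|})
    (hsuppos : 0 <
      sSup {r : ℝ | ∃ lam : StrongDual ℝ Y, ∃ mu : StrongDual ℝ Z,
        (‖lam‖ ^ p' + ‖mu‖ ^ p') ^ (1 / p') ≤ 1 ∧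
        lam.comp A + ρ ^ (1 / p) • mu.comp B = 0 ∧ r = |lam y0|}) :
    (muhat = 0 → B xhat = 0 ∧ ‖y0 - A xhat‖ = lamhat y0) ∧
    (lamhat ≠ 0 → muhat ≠ 0 →
      y0 - A xhat ≠ 0 ∧ B xhat ≠ 0 ∧
      (let α : ℝ := (1 + ‖muhat‖ ^ p' / ‖lamhat‖ ^ p') ^ (1 / p) / lamhat y0
       let β : ℝ := -(ρ ^ (1 / p) * (1 + ‖lamhat‖ ^ p' / ‖muhat‖ ^ p') ^ (1 / p)) / lamhat y0
       ‖α • (y0 - A xhat)‖ = 1 ∧ lamhat (α • (y0 - A xhat)) = ‖lamhat‖ ∧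
       ‖β • (B xhat)‖ = 1 ∧ muhat (β • (B xhat)) = ‖muhat‖)) := by
  have hp0 : (0:ℝ) < p := by linarith
  have hp'0 : (0:ℝ) < p' := by linarith
  have hpC : p'.HolderConjugate p := Real.holderConjugate_iff.mpr ⟨hp', by rw [inv_eq_one_div, inv_eq_one_div]; linarith⟩
  have hrpos : (0:ℝ) < ρ ^ ((1:ℝ)/p) := Real.rpow_pos_of_pos hρ _
  set S : ℝ := sInf {r : ℝ | ∃ x : X, r = (‖y0 - A x‖ ^ p + ρ * ‖B x‖ ^ p) ^ (1 / p)} with hS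
  have hS0 : 0 < S := hinfpos
  set a : ℝ := ‖y0 - A xhat‖ with ha
  set nb : ℝ := ‖B xhat‖ with hnb
  set b : ℝ := ρ ^ ((1:ℝ)/p) * nb with hb
  set u : ℝ := ‖lamhat‖ with hu
  set v : ℝ := ‖muhat‖ with hv
  have ha0 : 0 ≤ a := norm_nonneg _
  have hnb0 : 0 ≤ nb := norm_nonneg _
  have hb0 : 0 ≤ b := mul_nonneg hrpos.le hnb0
  have hu0 : 0 ≤ u := norm_nonneg _
  have hv0 : 0 ≤ v := norm_nonneg _
  have hρp : (ρ ^ ((1:ℝ)/p)) ^ p = ρ := by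
    rw [← Real.rpow_mul hρ.le, one_div_mul_cancel hp0.ne', Real.rpow_one]
  have hbp : b ^ p = ρ * nb ^ p := by
    rw [hb, Real.mul_rpow hrpos.le hnb0, hρp]
  -- sum of p'-powers equals 1
  have huv1 : u ^ p' + v ^ p' = 1 := by
    have hKnn : (0:ℝ) ≤ u ^ p' + v ^ p' := by positivity
    have h := congrArg (fun t : ℝ => t ^ p') hnorm1
    rwa [← Real.rpow_mul hKnn, one_div_mul_cancel hp'0.ne', Real.rpow_one,
      Real.one_rpow] at h
  -- sum of p-powers equals S^p
  have habS : a ^ p + b ^ p = S ^ p := by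
    have hVnn : (0:ℝ) ≤ a ^ p + ρ * nb ^ p := by positivity
    have h := congrArg (fun t : ℝ => t ^ p) hinf
    rw [← Real.rpow_mul hVnn, one_div_mul_cancel hp0.ne', Real.rpow_one] at h
    rw [hbp]
    exact h
  have hSp : (a ^ p + b ^ p) ^ ((1:ℝ)/p) = S := by
    rw [habS, ← Real.rpow_mul hS0.le, mul_one_div, div_self hp0.ne', Real.rpow_one]
  -- weak duality
  have weak : ∀ (lam : StrongDual ℝ Y) (mu : StrongDual ℝ Z),
      (‖lam‖ ^ p' + ‖mu‖ ^ p') ^ (1 / p') ≤ 1 →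
      lam.comp A + ρ ^ (1 / p) • mu.comp B = 0 → |lam y0| ≤ S := by
    intro lam mu h1 h2
    have hk : lam (A xhat) + ρ ^ ((1:ℝ)/p) * mu (B xhat) = 0 := by
      have h := ContinuousLinearMap.ext_iff.mp h2 xhat
      simpa using h
    have hdecomp : lam y0 = lam (y0 - A xhat) - ρ ^ ((1:ℝ)/p) * mu (B xhat) := by
      rw [map_sub]; linarith
    have h3 : |lam y0| ≤ ‖lam‖ * a + ‖mu‖ * b := by
      rw [hdecomp]
      calc |lam (y0 - A xhat) - ρ ^ ((1:ℝ)/p) * mu (B xhat)|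
          ≤ |lam (y0 - A xhat)| + |ρ ^ ((1:ℝ)/p) * mu (B xhat)| := abs_sub _ _
        _ ≤ ‖lam‖ * a + ‖mu‖ * b := by
            have e1 : |lam (y0 - A xhat)| ≤ ‖lam‖ * a := by
              rw [← Real.norm_eq_abs]; exact lam.le_opNorm _
            have e2 : |ρ ^ ((1:ℝ)/p) * mu (B xhat)| ≤ ‖mu‖ * b := by
              rw [abs_mul, abs_of_pos hrpos]
              have : |mu (B xhat)| ≤ ‖mu‖ * nb := by
                rw [← Real.norm_eq_abs]; exact mu.le_opNorm _
              calc ρ ^ ((1:ℝ)/p) * |mu (B xhat)| ≤ ρ ^ ((1:ℝ)/p) * (‖mu‖ * nb) :=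
                    mul_le_mul_of_nonneg_left this hrpos.le
                _ = ‖mu‖ * b := by rw [hb]; ring
            linarith
    have h4 : ‖lam‖ * a + ‖mu‖ * b ≤
        (‖lam‖ ^ p' + ‖mu‖ ^ p') ^ (1/p') * (a ^ p + b ^ p) ^ (1/p) :=
      holder2 hpC (norm_nonneg _) (norm_nonneg _) ha0 hb0
    have h5 : (‖lam‖ ^ p' + ‖mu‖ ^ p') ^ (1/p') * (a ^ p + b ^ p) ^ (1/p) ≤ 1 * S := by
      rw [hSp]
      exact mul_le_mul_of_nonneg_right h1 hS0.le
    linarith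
  -- strong duality
  have hbdd : BddAbove {r : ℝ | ∃ lam : StrongDual ℝ Y, ∃ mu : StrongDual ℝ Z,
      (‖lam‖ ^ p' + ‖mu‖ ^ p') ^ (1 / p') ≤ 1 ∧
      lam.comp A + ρ ^ (1 / p) • mu.comp B = 0 ∧ r = |lam y0|} := by
    refine ⟨S, fun r hr => ?_⟩
    obtain ⟨lam, mu, h1, h2, rfl⟩ := hr
    exact weak lam mu h1 h2
  have strong : S ≤ lamhat y0 := by
    obtain ⟨lam, mu, hf1, hf2, hf3⟩ :=
      exists_dual_pair A B y0 ρ hρ p p' hp hp' hpp' hinfpos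
    have hmem : S ∈ {r : ℝ | ∃ lam : StrongDual ℝ Y, ∃ mu : StrongDual ℝ Z,
        (‖lam‖ ^ p' + ‖mu‖ ^ p') ^ (1 / p') ≤ 1 ∧
        lam.comp A + ρ ^ (1 / p) • mu.comp B = 0 ∧ r = |lam y0|} := by
      refine ⟨lam, mu, hf1, hf2, ?_⟩
      rw [hf3, abs_of_pos hinfpos]
    rw [hsup]
    exact le_csSup hbdd hmem
  -- the equality chain for the optimal pair
  have hkerx : lamhat (A xhat) + ρ ^ ((1:ℝ)/p) * muhat (B xhat) = 0 := by
    have h := ContinuousLinearMap.ext_iff.mp hker xhat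
    simpa using h
  have hwk : lamhat y0 = lamhat (y0 - A xhat) - ρ ^ ((1:ℝ)/p) * muhat (B xhat) := by
    rw [map_sub]; linarith
  have c1 : lamhat (y0 - A xhat) ≤ u * a := by
    calc lamhat (y0 - A xhat) ≤ |lamhat (y0 - A xhat)| := le_abs_self _
      _ ≤ u * a := by rw [← Real.norm_eq_abs]; exact lamhat.le_opNorm _
  have c2 : -(ρ ^ ((1:ℝ)/p) * muhat (B xhat)) ≤ v * b := by
    calc -(ρ ^ ((1:ℝ)/p) * muhat (B xhat)) ≤ |ρ ^ ((1:ℝ)/p) * muhat (B xhat)| :=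
          neg_le_abs _
      _ ≤ v * b := by
          rw [abs_mul, abs_of_pos hrpos]
          have : |muhat (B xhat)| ≤ v * nb := by
            rw [← Real.norm_eq_abs]; exact muhat.le_opNorm _
          calc ρ ^ ((1:ℝ)/p) * |muhat (B xhat)| ≤ ρ ^ ((1:ℝ)/p) * (v * nb) :=
                mul_le_mul_of_nonneg_left this hrpos.le
            _ = v * b := by rw [hb]; ring
  have c3 : u * a + v * b ≤ S := by
    have h4 := holder2 hpC hu0 hv0 ha0 hb0
    rw [hnorm1, hSp, one_mul] at h4
    exact h4
  have E1 : lamhat (y0 - A xhat) = u * a := by linarith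
  have E2 : -(ρ ^ ((1:ℝ)/p) * muhat (B xhat)) = v * b := by linarith
  have E3 : u * a + v * b = S := by linarith
  have ES : lamhat y0 = S := by linarith
  constructor
  · -- case muhat = 0
    intro hmu0
    have hv' : v = 0 := by rw [hv, hmu0, norm_zero]
    have hup1 : u ^ p' = 1 := by
      rw [hv', Real.zero_rpow hp'0.ne'] at huv1
      linarith
    have hu1 : u = 1 := by
      have h := congrArg (fun t : ℝ => t ^ ((1:ℝ)/p')) hup1
      rwa [← Real.rpow_mul hu0, mul_one_div, div_self hp'0.ne', Real.rpow_one,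
        Real.one_rpow] at h
    have haS : a = S := by
      rw [hv', hu1] at E3
      linarith
    have hbp0 : b ^ p = 0 := by
      rw [haS] at habS
      linarith
    have hnb' : nb = 0 := by
      by_contra hne
      have hnbpos : 0 < nb := lt_of_le_of_ne hnb0 (Ne.symm hne)
      have : 0 < b := mul_pos hrpos hnbpos
      exact absurd hbp0 (Real.rpow_pos_of_pos this p).ne'
    constructor
    · rwa [← norm_eq_zero]
    · rw [haS, ES]
  · -- case both nonzero
    intro hlne hmne
    have hupos : 0 < u := norm_pos_iff.mpr hlne
    have hvpos : 0 < v := norm_pos_iff.mpr hmne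
    set a' : ℝ := a / S with ha'
    set b' : ℝ := b / S with hb'
    have ha'0 : 0 ≤ a' := div_nonneg ha0 hS0.le
    have hb'0 : 0 ≤ b' := div_nonneg hb0 hS0.le
    have hS_p_pos : 0 < S ^ p := Real.rpow_pos_of_pos hS0 p
    have ha'b' : a' ^ p + b' ^ p = 1 := by
      rw [ha', hb', Real.div_rpow ha0 hS0.le, Real.div_rpow hb0 hS0.le,
        ← add_div, habS, div_self hS_p_pos.ne']
    have huv' : u * a' + v * b' = 1 := by
      rw [ha', hb', ← mul_div_assoc, ← mul_div_assoc, ← add_div, E3,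
        div_self hS0.ne']
    have hy1 : u * a' ≤ u ^ p' / p' + a' ^ p / p :=
      Real.young_inequality_of_nonneg hu0 ha'0 hpC
    have hy2 : v * b' ≤ v ^ p' / p' + b' ^ p / p :=
      Real.young_inequality_of_nonneg hv0 hb'0 hpC
    have hsum : u ^ p' / p' + a' ^ p / p + (v ^ p' / p' + b' ^ p / p) = 1 := by
      have h1 : u ^ p' / p' + v ^ p' / p' = 1 / p' := by
        rw [← add_div, huv1]
      have h2 : a' ^ p / p + b' ^ p / p = 1 / p := by
        rw [← add_div, ha'b']
      linarith
    have heq1 : u * a' = u ^ p' / p' + a' ^ p / p := by linarith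
    have heq2 : v * b' = v ^ p' / p' + b' ^ p / p := by linarith
    have hYa : a' ^ p = u ^ p' := young_eq hp hp' hpp' hu0 ha'0 heq1
    have hYb : b' ^ p = v ^ p' := young_eq hp hp' hpp' hv0 hb'0 heq2
    have ha'pos : 0 < a' := by
      rcases eq_or_lt_of_le ha'0 with h | h
      · exfalso
        rw [← h, Real.zero_rpow hp0.ne'] at hYa
        exact absurd hYa.symm (Real.rpow_pos_of_pos hupos p').ne'
      · exact h
    have hb'pos : 0 < b' := by
      rcases eq_or_lt_of_le hb'0 with h | h
      · exfalso
        rw [← h, Real.zero_rpow hp0.ne'] at hYb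
        exact absurd hYb.symm (Real.rpow_pos_of_pos hvpos p').ne'
      · exact h
    have hapos : 0 < a := by
      have : a = a' * S := by rw [ha']; field_simp
      rw [this]; exact mul_pos ha'pos hS0
    have hbpos : 0 < b := by
      have : b = b' * S := by rw [hb']; field_simp
      rw [this]; exact mul_pos hb'pos hS0
    have hnbpos : 0 < nb := by
      by_contra h
      push_neg at h
      have : nb = 0 := le_antisymm h hnb0
      rw [hb, this, mul_zero] at hbpos
      exact lt_irrefl 0 hbpos
    refine ⟨by rwa [← norm_pos_iff], by rwa [← norm_pos_iff], ?_⟩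
    intro α β
    have hαdef : α = (1 + v ^ p' / u ^ p') ^ ((1:ℝ)/p) / lamhat y0 := rfl
    have hβdef : β = -(ρ ^ ((1:ℝ)/p) * (1 + u ^ p' / v ^ p') ^ ((1:ℝ)/p)) / lamhat y0 := rfl
    have hup_pos : 0 < u ^ p' := Real.rpow_pos_of_pos hupos p'
    have hvp_pos : 0 < v ^ p' := Real.rpow_pos_of_pos hvpos p'
    -- a' = (u^p')^(1/p)
    have ha'eq : a' = (u ^ p') ^ ((1:ℝ)/p) := by
      rw [← hYa, ← Real.rpow_mul ha'0, mul_one_div, div_self hp0.ne', Real.rpow_one]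
    have hb'eq : b' = (v ^ p') ^ ((1:ℝ)/p) := by
      rw [← hYb, ← Real.rpow_mul hb'0, mul_one_div, div_self hp0.ne', Real.rpow_one]
    have hαval : α = 1 / a := by
      rw [hαdef, ES]
      have h6 : 1 + v ^ p' / u ^ p' = 1 / u ^ p' := by
        field_simp
        linarith
      rw [h6, Real.div_rpow zero_le_one hup_pos.le, Real.one_rpow, ← ha'eq]
      rw [ha']
      field_simp
    have hβval : β = -(1 / nb) := by
      rw [hβdef, ES]
      have h7 : 1 + u ^ p' / v ^ p' = 1 / v ^ p' := by
        field_simp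
        linarith
      rw [h7, Real.div_rpow zero_le_one hvp_pos.le, Real.one_rpow, ← hb'eq]
      rw [hb', hb]
      field_simp
    have hmuB : muhat (B xhat) = -(v * nb) := by
      have h0 : ρ ^ ((1:ℝ)/p) * muhat (B xhat) = -(v * b) := by linarith
      rw [hb] at h0
      have h8 : ρ ^ ((1:ℝ)/p) * muhat (B xhat) = ρ ^ ((1:ℝ)/p) * -(v * nb) := by
        rw [h0]; ring
      exact mul_left_cancel₀ hrpos.ne' h8
    refine ⟨?_, ?_, ?_, ?_⟩
    · rw [norm_smul, hαval, Real.norm_eq_abs, abs_of_pos (by positivity : (0:ℝ) < 1/a),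
        ← ha]
      field_simp
    · rw [map_smul, smul_eq_mul, E1, hαval]
      field_simp
    · rw [norm_smul, hβval, Real.norm_eq_abs, abs_neg,
        abs_of_pos (show (0:ℝ) < 1/nb by positivity), ← hnb]
      field_simp
    · rw [map_smul, smul_eq_mul, hβval, hmuB]
      field_simp
end

section
/- Let X, Y and Z be real Banach spaces, let A : X → Y and B : X → Z be bounded linear operators with adjoints A*, B*, let y0 ∈ Y and ρ > 0. Suppose x̂ ∈ X satisfies ‖y0 − Ax̂‖_Y + ρ‖Bx̂‖_Z = inf{ ‖y0 − Ax‖_Y + ρ‖Bx‖_Z : x ∈ X } > 0, and suppose λ̂ ∈ Y*, μ̂ ∈ Z* satisfy max{‖λ̂‖_{Y*}, ‖μ̂‖_{Z*}} = 1, A*λ̂ + ρ B*μ̂ = 0, and λ̂(y0) = sup{ |λ(y0)| : λ ∈ Y*, μ ∈ Z*, max{‖λ‖_{Y*}, ‖μ‖_{Z*}} ≤ 1, A*λ + ρ B*μ = 0 } > 0. Then: (1) if ‖λ̂‖_{Y*} > ‖μ̂‖_{Z*}, then Bx̂ = 0 and ‖y0 − Ax̂‖_Y = λ̂(y0); (2)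 if ‖λ̂‖_{Y*} < ‖μ̂‖_{Z*}, then Ax̂ = y0 and ρ‖Bx̂‖_Z = λ̂(y0); (3) if ‖λ̂‖_{Y*} = ‖μ̂‖_{Z*}, then one of the following holds: (i) Bx̂ = 0 and ‖y0 − Ax̂‖_Y = λ̂(y0); (ii) Ax̂ = y0 and ρ‖Bx̂‖_Z = λ̂(y0); (iii) y0 − Ax̂ ≠ 0, Bx̂ ≠ 0, (y0 − Ax̂)/‖y0 − Ax̂‖_Y is norming for λ̂, and −Bx̂/‖Bx̂‖_Z is norming for μ̂. -/
open NormedSpace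

set_option maxHeartbeats 1000000 in
theorem aux_strong
    {X Y Z : Type*} [NormedAddCommGroup X] [NormedSpace ℝ X]
    [NormedAddCommGroup Y] [NormedSpace ℝ Y]
    [NormedAddCommGroup Z] [NormedSpace ℝ Z]
    (A : X →L[ℝ] Y) (B : X →L[ℝ] Z) (y0 : Y) (ρ : ℝ) (hρ : 0 < ρ)
    (S : ℝ) (hSpos : 0 < S)
    (hS_le : ∀ x : X, S ≤ ‖y0 - A x‖ + ρ * ‖B x‖) :
    ∃ lam : StrongDual ℝ Y, ∃ mu : StrongDual ℝ Z,
      max ‖lam‖ ‖mu‖ ≤ 1 ∧ lam.comp A + ρ • mu.comp B = 0 ∧ S ≤ lam y0 := by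
  set U : Set (Y × Z) := {p | ‖p.1‖ + ρ * ‖p.2‖ < S} with hU
  set L : Set (Y × Z) := Set.range (fun x : X => (y0 - A x, B x)) with hL
  have hco : ConvexOn ℝ (Set.univ : Set (Y × Z)) (fun p : Y × Z => ‖p.1‖ + ρ * ‖p.2‖) := by
    have h1 : ConvexOn ℝ (Set.univ : Set (Y × Z)) (fun p : Y × Z => ‖p.1‖) := by
      have := (convexOn_norm (convex_univ (𝕜 := ℝ) (E := Y))).comp_affineMap
        ((LinearMap.fst ℝ Y Z).toAffineMap)
      simpa [Function.comp_def] using this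
    have h2 : ConvexOn ℝ (Set.univ : Set (Y × Z)) (fun p : Y × Z => ρ * ‖p.2‖) := by
      have := ((convexOn_norm (convex_univ (𝕜 := ℝ) (E := Z))).comp_affineMap
        ((LinearMap.snd ℝ Y Z).toAffineMap)).smul hρ.le
      simpa [smul_eq_mul] using this
    exact h1.add h2
  have hUconv : Convex ℝ U := by
    have := hco.convex_lt S
    simpa [hU, Set.sep_univ] using this
  have hUopen : IsOpen U := by
    have hc : Continuous fun p : Y × Z => ‖p.1‖ + ρ * ‖p.2‖ :=
      (continuous_fst.norm.add (continuous_const.mul continuous_snd.norm))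
    exact isOpen_Iio.preimage hc
  have hLconv : Convex ℝ L := by
    rintro _ ⟨x, rfl⟩ _ ⟨x', rfl⟩ α β hα hβ hαβ
    refine ⟨α • x + β • x', ?_⟩
    have hy : α • y0 + β • y0 = y0 := by rw [← add_smul, hαβ, one_smul]
    rw [Prod.ext_iff]
    constructor
    · show y0 - A (α • x + β • x') = α • (y0 - A x) + β • (y0 - A x')
      calc y0 - A (α • x + β • x')
          = (α • y0 + β • y0) - (α • A x + β • A x') := by
            rw [hy, map_add, map_smul, map_smul]
        _ = α • (y0 - A x) + β • (y0 - A x') := by rw [smul_sub, smul_sub]; abel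
    · show B (α • x + β • x') = α • B x + β • B x'
      simp [map_add, map_smul]
  have hdisj : Disjoint U L := by
    rw [Set.disjoint_left]
    rintro p hp ⟨x, rfl⟩
    simp only [hU, Set.mem_setOf_eq] at hp
    exact absurd hp (not_lt.2 (hS_le x))
  obtain ⟨f, s, hfU, hfL⟩ := geometric_hahn_banach_open hUconv hUopen hLconv hdisj
  set lamY : StrongDual ℝ Y := f.comp (ContinuousLinearMap.inl ℝ Y Z) with hlamY
  set psi : StrongDual ℝ Z := f.comp (ContinuousLinearMap.inr ℝ Y Z) with hpsi
  have hsplit : ∀ (y : Y) (z : Z), f (y, z) = lamY y + psi z := by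
    intro y z
    have h : (y, z) = ((y, 0) : Y × Z) + (0, z) := by simp
    rw [h, map_add]; rfl
  have hs_pos : 0 < s := by
    have h0 : ((0, 0) : Y × Z) ∈ U := by simp [hU, hSpos]
    have := hfU _ h0
    rwa [Prod.mk_zero_zero, map_zero] at this
  have hLge : ∀ x : X, s ≤ lamY y0 - lamY (A x) + psi (B x) := by
    intro x
    have := hfL _ ⟨x, rfl⟩
    rwa [hsplit, map_sub] at this
  have hlin : ∀ x : X, lamY (A x) = psi (B x) := by
    intro x
    by_contra h
    set g : ℝ := psi (B x) - lamY (A x) with hg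
    have hg0 : g ≠ 0 := sub_ne_zero_of_ne fun e => h e.symm
    set c : ℝ := s - lamY y0 with hc
    have key : ∀ t : ℝ, c ≤ t * g := by
      intro t
      have := hLge (t • x)
      simp only [map_smul, smul_eq_mul] at this
      simp only [hc, hg]; nlinarith [this]
    have := key ((c - 1) / g)
    rw [div_mul_cancel₀ _ hg0] at this
    linarith
  have hy0 : s ≤ lamY y0 := by
    have := hLge 0
    simpa using this
  have hUle : ∀ (y : Y) (z : Z), ‖y‖ + ρ * ‖z‖ ≤ S → lamY y + psi z ≤ s := by
    intro y z hyz
    by_contra hv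
    push_neg at hv
    set v : ℝ := lamY y + psi z with hvdef
    have hv0 : 0 < v := lt_trans hs_pos hv
    set cc : ℝ := (s + v) / (2 * v) with hcc
    have hcc0 : 0 < cc := by positivity
    have hcc1 : cc < 1 := by rw [hcc, div_lt_one (by linarith)]; linarith
    have hmem : ((cc • y, cc • z) : Y × Z) ∈ U := by
      simp only [hU, Set.mem_setOf_eq, norm_smul, Real.norm_eq_abs, abs_of_pos hcc0]
      calc cc * ‖y‖ + ρ * (cc * ‖z‖) = cc * (‖y‖ + ρ * ‖z‖) := by ring
        _ ≤ cc * S := mul_le_mul_of_nonneg_left hyz hcc0.le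
        _ < 1 * S := mul_lt_mul_of_pos_right hcc1 hSpos
        _ = S := one_mul S
    have hlt := hfU _ hmem
    rw [hsplit, map_smul, map_smul] at hlt
    simp only [smul_eq_mul] at hlt
    have hcv : cc * v = (s + v) / 2 := by rw [hcc]; field_simp
    have : cc * lamY y + cc * psi z = cc * v := by rw [hvdef]; ring
    linarith [hlt, this, hcv]
  have hlam_bound : ∀ y : Y, |lamY y| ≤ s / S * ‖y‖ := by
    intro y
    rcases eq_or_ne y 0 with rfl | hy
    · simp
    · have hny : (0 : ℝ) < ‖y‖ := norm_pos_iff.2 hy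
      have h1 : lamY ((S / ‖y‖) • y) ≤ s := by
        have := hUle ((S / ‖y‖) • y) 0 ?_
        · simpa using this
        · simp [norm_smul, abs_of_pos (div_pos hSpos hny), div_mul_cancel₀ _ hny.ne', abs_of_pos hSpos]
      have h2 : lamY ((S / ‖y‖) • (-y)) ≤ s := by
        have := hUle ((S / ‖y‖) • (-y)) 0 ?_
        · simpa using this
        · simp [norm_smul, abs_of_pos (div_pos hSpos hny), div_mul_cancel₀ _ hny.ne', abs_of_pos hSpos]
      rw [map_smul, smul_eq_mul] at h1
      rw [map_smul, map_neg, smul_eq_mul, mul_neg] at h2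
      have habs : S / ‖y‖ * |lamY y| ≤ s := by
        rcases abs_cases (lamY y) with ⟨he, _⟩ | ⟨he, _⟩
        · rw [he]; exact h1
        · rw [he, mul_neg]; linarith
      rw [div_mul_eq_mul_div, div_le_iff₀ hny] at habs
      rw [div_mul_eq_mul_div, le_div_iff₀ hSpos]
      linarith
  have hpsi_bound : ∀ z : Z, |psi z| ≤ s * ρ / S * ‖z‖ := by
    intro z
    rcases eq_or_ne z 0 with rfl | hz
    · simp
    · have hnz : (0 : ℝ) < ‖z‖ := norm_pos_iff.2 hz
      have hcpos : (0 : ℝ) < S / (ρ * ‖z‖) := div_pos hSpos (by positivity)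
      have hn : ‖(0 : Y)‖ + ρ * ‖(S / (ρ * ‖z‖)) • z‖ ≤ S := by
        rw [norm_zero, norm_smul, Real.norm_eq_abs, abs_of_pos hcpos, zero_add]
        have he : ρ * (S / (ρ * ‖z‖) * ‖z‖) = S := by field_simp
        rw [he]
      have hn' : ‖(0 : Y)‖ + ρ * ‖(S / (ρ * ‖z‖)) • (-z)‖ ≤ S := by
        rwa [norm_smul, norm_neg, ← norm_smul]
      have h1 := hUle 0 _ hn
      have h2 := hUle 0 _ hn'
      rw [map_zero, zero_add, map_smul, smul_eq_mul] at h1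
      rw [map_zero, zero_add, map_smul, map_neg, smul_eq_mul, mul_neg] at h2
      have habs : S / (ρ * ‖z‖) * |psi z| ≤ s := by
        rcases abs_cases (psi z) with ⟨he, _⟩ | ⟨he, _⟩
        · rw [he]; exact h1
        · rw [he, mul_neg]; linarith
      rw [div_mul_eq_mul_div, div_le_iff₀ (by positivity)] at habs
      rw [div_mul_eq_mul_div, le_div_iff₀ hSpos]
      linarith [habs]
  clear_value lamY psi
  clear hUle hLge hsplit hfU hfL hdisj hLconv hUopen hUconv hco hlamY hpsi
  clear f
  clear_value U L
  clear hU hL hS_le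
  clear U L
  refine ⟨(S / s) • lamY, -((S / (s * ρ)) • psi), ?_, ?_, ?_⟩
  · rw [max_le_iff]
    constructor
    · refine ContinuousLinearMap.opNorm_le_bound _ zero_le_one fun y => ?_
      rw [ContinuousLinearMap.smul_apply, smul_eq_mul, Real.norm_eq_abs, abs_mul,
        abs_of_pos (div_pos hSpos hs_pos), one_mul]
      calc S / s * |lamY y| ≤ S / s * (s / S * ‖y‖) :=
            mul_le_mul_of_nonneg_left (hlam_bound y) (div_pos hSpos hs_pos).le
        _ = ‖y‖ := by field_simp
    · refine ContinuousLinearMap.opNorm_le_bound _ zero_le_one fun z => ?_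
      rw [ContinuousLinearMap.neg_apply, ContinuousLinearMap.smul_apply, smul_eq_mul,
        Real.norm_eq_abs, abs_neg, abs_mul,
        abs_of_pos (div_pos hSpos (by positivity)), one_mul]
      calc S / (s * ρ) * |psi z| ≤ S / (s * ρ) * (s * ρ / S * ‖z‖) :=
            mul_le_mul_of_nonneg_left (hpsi_bound z) (div_pos hSpos (by positivity)).le
        _ = ‖z‖ := by field_simp
  · ext x
    simp only [ContinuousLinearMap.add_apply, ContinuousLinearMap.coe_comp',
      Function.comp_apply, ContinuousLinearMap.coe_smul', Pi.smul_apply,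
      ContinuousLinearMap.smul_apply, ContinuousLinearMap.neg_apply,
      ContinuousLinearMap.zero_apply, smul_eq_mul]
    rw [hlin x]
    field_simp
    ring
  · rw [ContinuousLinearMap.smul_apply, smul_eq_mul]
    calc S = S / s * s := by field_simp
      _ ≤ S / s * lamY y0 := mul_le_mul_of_nonneg_left hy0 (div_pos hSpos hs_pos).le

set_option maxHeartbeats 1000000 in
/-- solutions of the regularized extremal problem (`p = 1`) via
norming vectors associated with a dual solution. -/
theorem stmt_11
    {X Y Z : Type*} [NormedAddCommGroup X] [NormedSpace ℝ X] [CompleteSpace X]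
    [NormedAddCommGroup Y] [NormedSpace ℝ Y] [CompleteSpace Y]
    [NormedAddCommGroup Z] [NormedSpace ℝ Z] [CompleteSpace Z]
    (A : X →L[ℝ] Y) (B : X →L[ℝ] Z) (y0 : Y) (ρ : ℝ) (hρ : 0 < ρ)
    (xhat : X) (lamhat : StrongDual ℝ Y) (muhat : StrongDual ℝ Z)
    (hinf : ‖y0 - A xhat‖ + ρ * ‖B xhat‖ =
      sInf {r : ℝ | ∃ x : X, r = ‖y0 - A x‖ + ρ * ‖B x‖})
    (hinfpos : 0 < sInf {r : ℝ | ∃ x : X, r = ‖y0 - A x‖ + ρ * ‖B x‖})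
    (hnorm1 : max ‖lamhat‖ ‖muhat‖ = 1)
    (hker : lamhat.comp A + ρ • muhat.comp B = 0)
    (hsup : lamhat y0 =
      sSup {r : ℝ | ∃ lam : StrongDual ℝ Y, ∃ mu : StrongDual ℝ Z,
        max ‖lam‖ ‖mu‖ ≤ 1 ∧ lam.comp A + ρ • mu.comp B = 0 ∧ r = |lam y0|})
    (hsuppos : 0 <
      sSup {r : ℝ | ∃ lam : StrongDual ℝ Y, ∃ mu : StrongDual ℝ Z,
        max ‖lam‖ ‖mu‖ ≤ 1 ∧ lam.comp A + ρ • mu.comp B = 0 ∧ r = |lam y0|}) :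
    (‖lamhat‖ > ‖muhat‖ → B xhat = 0 ∧ ‖y0 - A xhat‖ = lamhat y0) ∧
    (‖lamhat‖ < ‖muhat‖ → A xhat = y0 ∧ ρ * ‖B xhat‖ = lamhat y0) ∧
    (‖lamhat‖ = ‖muhat‖ →
      ((B xhat = 0 ∧ ‖y0 - A xhat‖ = lamhat y0) ∨
       (A xhat = y0 ∧ ρ * ‖B xhat‖ = lamhat y0) ∨
       (y0 - A xhat ≠ 0 ∧ B xhat ≠ 0 ∧
         ‖(‖y0 - A xhat‖)⁻¹ • (y0 - A xhat)‖ = 1 ∧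
         lamhat ((‖y0 - A xhat‖)⁻¹ • (y0 - A xhat)) = ‖lamhat‖ ∧
         ‖-((‖B xhat‖)⁻¹ • (B xhat))‖ = 1 ∧
         muhat (-((‖B xhat‖)⁻¹ • (B xhat))) = ‖muhat‖))) := by
  set S : ℝ := sInf {r : ℝ | ∃ x : X, r = ‖y0 - A x‖ + ρ * ‖B x‖} with hSdef
  have hbdd : BddBelow {r : ℝ | ∃ x : X, r = ‖y0 - A x‖ + ρ * ‖B x‖} := by
    refine ⟨0, ?_⟩
    rintro r ⟨x, rfl⟩
    positivity
  have hS_le : ∀ x : X, S ≤ ‖y0 - A x‖ + ρ * ‖B x‖ := fun x => csInf_le hbdd ⟨x, rfl⟩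
  have hweak : ∀ (lam : StrongDual ℝ Y) (mu : StrongDual ℝ Z), max ‖lam‖ ‖mu‖ ≤ 1 →
      lam.comp A + ρ • mu.comp B = 0 → lam y0 ≤ S := by
    intro lam mu hmax hk
    have hx := congrArg (fun g : X →L[ℝ] ℝ => g xhat) hk
    simp only [ContinuousLinearMap.add_apply, ContinuousLinearMap.coe_comp',
      Function.comp_apply, ContinuousLinearMap.coe_smul', Pi.smul_apply, smul_eq_mul,
      ContinuousLinearMap.zero_apply] at hx
    have h1 : lam (y0 - A xhat) ≤ ‖lam‖ * ‖y0 - A xhat‖ :=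
      le_trans (le_abs_self _) (by simpa [Real.norm_eq_abs] using lam.le_opNorm (y0 - A xhat))
    have h2 : mu (-(B xhat)) ≤ ‖mu‖ * ‖B xhat‖ := by
      have := le_trans (le_abs_self _) (mu.le_opNorm (-(B xhat)))
      simpa [Real.norm_eq_abs, norm_neg] using this
    have hl1 : ‖lam‖ ≤ 1 := le_trans (le_max_left _ _) hmax
    have hm1 : ‖mu‖ ≤ 1 := le_trans (le_max_right _ _) hmax
    have hsplit : lam y0 = lam (y0 - A xhat) + ρ * mu (-(B xhat)) := by
      rw [map_sub, map_neg]
      linarith [hx]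
    have hn1 : (0:ℝ) ≤ ‖y0 - A xhat‖ := norm_nonneg _
    have hn2 : (0:ℝ) ≤ ‖B xhat‖ := norm_nonneg _
    have e1 : ‖lam‖ * ‖y0 - A xhat‖ ≤ ‖y0 - A xhat‖ := by
      simpa using mul_le_mul_of_nonneg_right hl1 hn1
    have e2 : ‖mu‖ * ‖B xhat‖ ≤ ‖B xhat‖ := by
      simpa using mul_le_mul_of_nonneg_right hm1 hn2
    rw [hsplit]
    have hprod : ρ * mu (-(B xhat)) ≤ ρ * ‖B xhat‖ :=
      mul_le_mul_of_nonneg_left (le_trans h2 e2) hρ.le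
    linarith [hinf, h1, e1, hprod]
  obtain ⟨lam0, mu0, hmax0, hk0, hge0⟩ := aux_strong A B y0 ρ hρ S hinfpos hS_le
  have hTub : ∀ r ∈ {r : ℝ | ∃ lam : StrongDual ℝ Y, ∃ mu : StrongDual ℝ Z,
      max ‖lam‖ ‖mu‖ ≤ 1 ∧ lam.comp A + ρ • mu.comp B = 0 ∧ r = |lam y0|}, r ≤ S := by
    rintro r ⟨lam, mu, h1, h2, rfl⟩
    have hub := hweak lam mu h1 h2
    have hk' : (-lam).comp A + ρ • (-mu).comp B = 0 := by
      rw [ContinuousLinearMap.neg_comp, ContinuousLinearMap.neg_comp, smul_neg,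
        ← neg_add, h2, neg_zero]
    have h1' : max ‖-lam‖ ‖-mu‖ ≤ 1 := by rwa [norm_neg, norm_neg]
    have hlb := hweak (-lam) (-mu) h1' hk'
    rw [ContinuousLinearMap.neg_apply] at hlb
    exact abs_le.2 ⟨by linarith, hub⟩
  have hmem0 : |lam0 y0| ∈ {r : ℝ | ∃ lam : StrongDual ℝ Y, ∃ mu : StrongDual ℝ Z,
      max ‖lam‖ ‖mu‖ ≤ 1 ∧ lam.comp A + ρ • mu.comp B = 0 ∧ r = |lam y0|} :=
    ⟨lam0, mu0, hmax0, hk0, rfl⟩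
  have hTbdd : BddAbove {r : ℝ | ∃ lam : StrongDual ℝ Y, ∃ mu : StrongDual ℝ Z,
      max ‖lam‖ ‖mu‖ ≤ 1 ∧ lam.comp A + ρ • mu.comp B = 0 ∧ r = |lam y0|} :=
    ⟨S, fun r hr => hTub r hr⟩
  have hsup_eq : sSup {r : ℝ | ∃ lam : StrongDual ℝ Y, ∃ mu : StrongDual ℝ Z,
      max ‖lam‖ ‖mu‖ ≤ 1 ∧ lam.comp A + ρ • mu.comp B = 0 ∧ r = |lam y0|} = S :=
    le_antisymm (csSup_le ⟨_, hmem0⟩ hTub)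
      (le_trans (le_trans hge0 (le_abs_self _)) (le_csSup hTbdd hmem0))
  have hV : lamhat y0 = S := hsup.trans hsup_eq
  have hxk := congrArg (fun g : X →L[ℝ] ℝ => g xhat) hker
  simp only [ContinuousLinearMap.add_apply, ContinuousLinearMap.coe_comp',
    Function.comp_apply, ContinuousLinearMap.coe_smul', Pi.smul_apply, smul_eq_mul,
    ContinuousLinearMap.zero_apply] at hxk
  have hl1 : ‖lamhat‖ ≤ 1 := le_trans (le_max_left _ _) hnorm1.le
  have hm1 : ‖muhat‖ ≤ 1 := le_trans (le_max_right _ _) hnorm1.le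
  have hn1 : (0:ℝ) ≤ ‖y0 - A xhat‖ := norm_nonneg _
  have hn2 : (0:ℝ) ≤ ‖B xhat‖ := norm_nonneg _
  have hsplit : lamhat y0 = lamhat (y0 - A xhat) + ρ * muhat (-(B xhat)) := by
    rw [map_sub, map_neg]
    linarith [hxk]
  have b1 : lamhat (y0 - A xhat) ≤ ‖lamhat‖ * ‖y0 - A xhat‖ :=
    le_trans (le_abs_self _) (by simpa [Real.norm_eq_abs] using lamhat.le_opNorm (y0 - A xhat))
  have b2 : muhat (-(B xhat)) ≤ ‖muhat‖ * ‖B xhat‖ := by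
    have := le_trans (le_abs_self _) (muhat.le_opNorm (-(B xhat)))
    simpa [Real.norm_eq_abs, norm_neg] using this
  have b1' : ‖lamhat‖ * ‖y0 - A xhat‖ ≤ ‖y0 - A xhat‖ := by
    simpa using mul_le_mul_of_nonneg_right hl1 hn1
  have b2' : ‖muhat‖ * ‖B xhat‖ ≤ ‖B xhat‖ := by
    simpa using mul_le_mul_of_nonneg_right hm1 hn2
  have hsum : lamhat (y0 - A xhat) + ρ * muhat (-(B xhat)) =
      ‖y0 - A xhat‖ + ρ * ‖B xhat‖ := by
    rw [← hsplit, hV]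
    linarith [hinf]
  have hta : lamhat (y0 - A xhat) ≤ ‖y0 - A xhat‖ := le_trans b1 b1'
  have htb : muhat (-(B xhat)) ≤ ‖B xhat‖ := le_trans b2 b2'
  have hprod : ρ * muhat (-(B xhat)) ≤ ρ * ‖B xhat‖ :=
    mul_le_mul_of_nonneg_left htb hρ.le
  have key1 : lamhat (y0 - A xhat) = ‖y0 - A xhat‖ := by linarith [hsum, hta, hprod]
  have key2 : muhat (-(B xhat)) = ‖B xhat‖ := by
    have hprod2 : ρ * ‖B xhat‖ ≤ ρ * muhat (-(B xhat)) := by linarith [hsum, hta]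
    exact le_antisymm htb (le_of_mul_le_mul_left hprod2 hρ)
  have key3 : ‖lamhat‖ * ‖y0 - A xhat‖ = ‖y0 - A xhat‖ :=
    le_antisymm b1' (key1 ▸ b1)
  have key4 : ‖muhat‖ * ‖B xhat‖ = ‖B xhat‖ :=
    le_antisymm b2' (key2 ▸ b2)
  refine ⟨?_, ?_, ?_⟩
  · intro hgt
    have hml : ‖muhat‖ < 1 := lt_of_lt_of_le hgt hl1
    have hb0 : ‖B xhat‖ = 0 := by
      by_contra h
      exact hml.ne (mul_right_cancel₀ h (key4.trans (one_mul ‖B xhat‖).symm))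
    refine ⟨norm_eq_zero.1 hb0, ?_⟩
    rw [hV]
    have hbz : ρ * ‖B xhat‖ = 0 := by rw [hb0, mul_zero]
    linarith [hinf, hbz]
  · intro hlt
    have hll : ‖lamhat‖ < 1 := lt_of_lt_of_le hlt hm1
    have ha0 : ‖y0 - A xhat‖ = 0 := by
      by_contra h
      exact hll.ne (mul_right_cancel₀ h (key3.trans (one_mul ‖y0 - A xhat‖).symm))
    refine ⟨(sub_eq_zero.1 (norm_eq_zero.1 ha0)).symm, ?_⟩
    rw [hV]
    linarith [hinf, ha0]
  · intro heq
    have hl : ‖lamhat‖ = 1 := by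
      rw [← hnorm1, heq, max_self]
    have hm : ‖muhat‖ = 1 := heq ▸ hl
    by_cases hb : B xhat = 0
    · refine Or.inl ⟨hb, ?_⟩
      have hb0 : ‖B xhat‖ = 0 := by rw [hb, norm_zero]
      rw [hV]
      have hbz : ρ * ‖B xhat‖ = 0 := by rw [hb0, mul_zero]
      linarith [hinf, hbz]
    · by_cases ha : y0 - A xhat = 0
      · refine Or.inr (Or.inl ⟨(sub_eq_zero.1 ha).symm, ?_⟩)
        have ha0 : ‖y0 - A xhat‖ = 0 := by rw [ha, norm_zero]
        rw [hV]
        linarith [hinf, ha0]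
      · have hapos : (0:ℝ) < ‖y0 - A xhat‖ := norm_pos_iff.2 ha
        have hbpos : (0:ℝ) < ‖B xhat‖ := norm_pos_iff.2 hb
        refine Or.inr (Or.inr ⟨ha, hb, ?_, ?_, ?_, ?_⟩)
        · rw [norm_smul, Real.norm_eq_abs, abs_of_pos (inv_pos.2 hapos),
            inv_mul_cancel₀ hapos.ne']
        · rw [map_smul, smul_eq_mul, key1, inv_mul_cancel₀ hapos.ne', hl]
        · rw [norm_neg, norm_smul, Real.norm_eq_abs, abs_of_pos (inv_pos.2 hbpos),
            inv_mul_cancel₀ hbpos.ne']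
        · rw [← smul_neg, map_smul, smul_eq_mul, key2, inv_mul_cancel₀ hbpos.ne', hm]
end
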